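/- arXiv:1705.03842 — 10 statements merged into one kernel-verified Lean document; each statement's English description precedes it below -/
import Mathlib

section
/- Let K be a field of characteristic 0, and let P_0, ..., P_k ∈ K[x] be polynomials defining the differential equation Σ_{i=0}^{k} P_i(x) f^{(i)}(x) = 0. If (x-a)^e satisfies this equation for some a ∈ K and integer e ≥ k, then P_k(a) = 0. -/
open Polynomial

theorem stmt3 (K : Type*) [Field K] [CharZero K] (k : ℕ)
    (P : ℕ → Polynomial K) (a : K) (e : ℕ) (he : k ≤ e)
    (hsol : ∑ i ∈ Finset.range (k + 1),
        P i * derivative^[i] ((X - C a) ^ e) = 0) :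
    (P k).eval a = 0 := by
  have h1 : ∀ i ∈ Finset.range (k + 1),
      P i * derivative^[i] ((X - C a) ^ e)
        = (P i * (e.descFactorial i • (X - C a) ^ (k - i))) * (X - C a) ^ (e - k) := by
    intro i hi
    rw [Finset.mem_range, Nat.lt_succ_iff] at hi
    rw [iterate_derivative_X_sub_pow, mul_assoc, smul_mul_assoc, ← pow_add]
    congr 3
    omega
  rw [Finset.sum_congr rfl h1, ← Finset.sum_mul] at hsol
  have h2 : (∑ i ∈ Finset.range (k + 1),
      P i * (e.descFactorial i • (X - C a) ^ (k - i))) = 0 := by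
    rcases mul_eq_zero.1 hsol with h | h
    · exact h
    · exact absurd h (pow_ne_zero _ (X_sub_C_ne_zero a))
  have h3 := congrArg (eval a) h2
  rw [Finset.sum_range_succ] at h3
  simp only [eval_add, eval_finset_sum, eval_mul, eval_smul, eval_natCast, eval_pow, eval_sub, eval_X, eval_C,
    sub_self, smul_eq_mul, nsmul_eq_mul, eval_one, Nat.sub_self, pow_zero, mul_one, eval_zero] at h3
  have hz : ∀ i ∈ Finset.range k,
      eval a (P i) * ((e.descFactorial i : K) * (0 : K) ^ (k - i)) = 0 := by
    intro i hi
    rw [Finset.mem_range] at hi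
    rw [zero_pow (by omega), mul_zero, mul_zero]
  rw [Finset.sum_congr rfl hz, Finset.sum_const, smul_zero, zero_add] at h3
  have hd : (e.descFactorial k : K) ≠ 0 :=
    Nat.cast_ne_zero.2 (fun h => absurd (Nat.descFactorial_eq_zero_iff_lt.1 h) (by omega))
  rcases mul_eq_zero.1 h3 with h | h
  · exact h
  · exact absurd h hd
end

section
/- Let K be a field of characteristic 0 and Σ_{i=0}^{k} P_i(x) f^{(i)}(x) = 0 a linear differential equation with polynomial coefficients P_i ∈ K[x]. Suppose the monomials x^{e_1}, ..., x^{e_n} all satisfy this equation, where n ≤ k and e_1 > e_2 > ... > e_n ≥ k - n + 1. Then for every m with 0 ≤ m ≤ n-1, the polynomial x^{n-m} divides P_{k-m}. -/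
open Polynomial

theorem stmt4 (K : Type*) [Field K] [CharZero K] (k n : ℕ)
    (P : ℕ → Polynomial K) (e : Fin n → ℕ)
    (hn : n ≤ k) (hanti : StrictAnti e) (hbig : ∀ j, k - n + 1 ≤ e j)
    (hsol : ∀ j : Fin n,
      ∑ i ∈ Finset.range (k + 1), P i * derivative^[i] (X ^ (e j)) = 0) :
    ∀ m, m ≤ n - 1 → (X : Polynomial K) ^ (n - m) ∣ P (k - m) := by
  classical
  -- strict antitonicity gives a gap estimate
  have hstep : ∀ t : ℕ, ∀ a b : Fin n, (b : ℕ) = (a : ℕ) + t → e b + t ≤ e a := by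
    intro t
    induction t with
    | zero =>
      intro a b h
      have : b = a := Fin.ext (by omega)
      simp [this]
    | succ t ih =>
      intro a b h
      have hb : (b : ℕ) < n := b.isLt
      have ha1 : (a : ℕ) + 1 < n := by omega
      have h2 : e b + t ≤ e ⟨(a : ℕ) + 1, ha1⟩ := ih ⟨(a : ℕ) + 1, ha1⟩ b (by simp; omega)
      have h3 : e ⟨(a : ℕ) + 1, ha1⟩ < e a := hanti (by simp [Fin.lt_def])
      omega
  -- main claim
  have key : ∀ d, k - n + 1 ≤ d → d ≤ k → ∀ s, s ≤ k - d → (P (d + s)).coeff s = 0 := by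
    intro d hd1 hd2
    have hn0 : 1 ≤ n := by by_contra h; omega
    set u : ℕ → K := fun s => (P (d + s)).coeff s with hu_def
    -- step A
    have hA : ∀ j : Fin n, d ≤ e j →
        (∑ s ∈ Finset.range (k - d + 1),
          (Nat.descFactorial (e j - d) s : K) * u s) * (Nat.descFactorial (e j) d : K) = 0 := by
      intro j hj
      have h1 : ∑ i ∈ Finset.range (k + 1),
          (Nat.descFactorial (e j) i : K) * ((P i * X ^ (e j - i)).coeff (e j - d)) = 0 := by
        have := congrArg (fun p : Polynomial K => p.coeff (e j - d)) (hsol j)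
        simp only [finset_sum_coeff, coeff_zero] at this
        rw [← this]
        apply Finset.sum_congr rfl
        intro i _
        rw [iterate_derivative_X_pow_eq_C_mul, mul_left_comm, coeff_C_mul]
      have h2 : ∀ i, (Nat.descFactorial (e j) i : K) * ((P i * X ^ (e j - i)).coeff (e j - d))
          = if d ≤ i then (Nat.descFactorial (e j) i : K) * (P i).coeff (i - d) else 0 := by
        intro i
        rw [coeff_mul_X_pow']
        by_cases hie : i ≤ e j
        · by_cases hdi : d ≤ i
          · rw [if_pos hdi, if_pos (by omega : e j - i ≤ e j - d)]
            congr 2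
            omega
          · rw [if_neg hdi, if_neg (by omega), mul_zero]
        · have hz : Nat.descFactorial (e j) i = 0 :=
            Nat.descFactorial_eq_zero_iff_lt.mpr (by omega)
          simp [hz]
      rw [Finset.sum_congr rfl (fun i _ => h2 i)] at h1
      rw [Finset.sum_ite, Finset.sum_const_zero, add_zero] at h1
      have hfil : (Finset.range (k + 1)).filter (fun i => d ≤ i) = Finset.Ico d (k + 1) := by
        ext i
        simp [Finset.mem_filter, Finset.mem_Ico, Finset.mem_range]
        omega
      rw [hfil, Finset.sum_Ico_eq_sum_range] at h1
      have hrange : k + 1 - d = k - d + 1 := by omega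
      rw [hrange] at h1
      rw [Finset.sum_mul]
      rw [← h1]
      apply Finset.sum_congr rfl
      intro s _
      have hdf : (e j - d).descFactorial ((d + s) - d) * (e j).descFactorial d
          = (e j).descFactorial (d + s) :=
        Nat.descFactorial_mul_descFactorial (by omega : d ≤ d + s)
      have hds : (d + s) - d = s := by omega
      rw [hds] at hdf
      have hPs : (P (d + s)).coeff ((d + s) - d) = u s := by rw [hds]
      rw [hPs, ← hdf]
      push_cast
      ring
    -- step B/C: the polynomial Q
    set Q : Polynomial K := ∑ s ∈ Finset.range (k - d + 1),
      C (u s) * descPochhammer K s with hQ_def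
    have hkd : k - d ≤ n - 1 := by omega
    have hed : ∀ t : ℕ, t ≤ k - d → ∀ ht : t < n, d ≤ e ⟨t, ht⟩ := by
      intro t htle ht
      have hlast : n - 1 < n := by omega
      have := hstep ((n - 1) - t) ⟨t, ht⟩ ⟨n - 1, hlast⟩ (by simp; omega)
      have hb := hbig ⟨n - 1, hlast⟩
      omega
    have hQeval : ∀ t : ℕ, ∀ ht : t ≤ k - d,
        Q.eval (((e ⟨t, by omega⟩ - d : ℕ) : K)) = 0 := by
      intro t ht
      have htn : t < n := by omega
      set j : Fin n := ⟨t, htn⟩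
      have hj : d ≤ e j := hed t ht htn
      have hne : ((Nat.descFactorial (e j) d : K)) ≠ 0 := by
        rw [Nat.cast_ne_zero]
        intro h
        rw [Nat.descFactorial_eq_zero_iff_lt] at h
        omega
      have hEv : Q.eval (((e j - d : ℕ) : K))
          = ∑ s ∈ Finset.range (k - d + 1), (Nat.descFactorial (e j - d) s : K) * u s := by
        rw [hQ_def, eval_finset_sum]
        apply Finset.sum_congr rfl
        intro s _
        rw [eval_mul, eval_C, descPochhammer_eval_eq_descFactorial]
        ring
      have := hA j hj
      rw [mul_eq_zero] at this
      rcases this with h | h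
      · rw [hEv, h]
      · exact absurd h hne
    have hQdeg : Q.natDegree ≤ k - d := by
      apply natDegree_sum_le_of_forall_le
      intro s hs
      refine le_trans (natDegree_C_mul_le _ _) ?_
      rw [descPochhammer_natDegree]
      simpa using Nat.lt_succ_iff.mp (Finset.mem_range.mp hs)
    -- Q = 0
    have hQ0 : Q = 0 := by
      apply Polynomial.eq_zero_of_natDegree_lt_card_of_eval_eq_zero Q
        (f := fun t : Fin (k - d + 1) =>
          ((e ⟨(t : ℕ), by omega⟩ - d : ℕ) : K))
      · intro a b hab
        have ha : (a : ℕ) < n := by omega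
        have hb : (b : ℕ) < n := by omega
        rw [Nat.cast_inj] at hab
        have hda : d ≤ e ⟨(a : ℕ), ha⟩ := hed _ (by omega) ha
        have hdb : d ≤ e ⟨(b : ℕ), hb⟩ := hed _ (by omega) hb
        have : e ⟨(a : ℕ), ha⟩ = e ⟨(b : ℕ), hb⟩ := by omega
        have := hanti.injective this
        exact Fin.ext (by simpa [Fin.ext_iff] using this)
      · intro t
        exact hQeval (t : ℕ) (by omega)
      · simpa using Nat.lt_succ_iff.mpr hQdeg
    -- extract coefficients
    have hu : ∀ r : ℕ, ∀ s, s ≤ k - d → k - d - s < r → u s = 0 := by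
      intro r
      induction r with
      | zero => intro s _ h; omega
      | succ r ih =>
        intro s hs hlt
        by_cases hcase : k - d - s < r
        · exact ih s hs hcase
        have hcoeff : Q.coeff s = 0 := by rw [hQ0, coeff_zero]
        rw [hQ_def, finset_sum_coeff] at hcoeff
        rw [Finset.sum_eq_single s] at hcoeff
        · have hmon : (descPochhammer K s).coeff s = 1 := by
            have h := (monic_descPochhammer K s).coeff_natDegree
            rwa [descPochhammer_natDegree] at h
          rwa [coeff_C_mul, hmon, mul_one] at hcoeff
        · intro b hb hbs
          rcases lt_or_gt_of_ne hbs with hlt' | hgt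
          · -- b < s : u b coefficient times coeff of descPochhammer b at s, which is 0
            rw [coeff_C_mul, coeff_eq_zero_of_natDegree_lt, mul_zero]
            rw [descPochhammer_natDegree]
            exact hlt'
          · -- b > s : u b = 0 by ih
            have hb' : b ≤ k - d := Nat.lt_succ_iff.mp (Finset.mem_range.mp hb)
            have : u b = 0 := ih b hb' (by omega)
            rw [this, map_zero, zero_mul, coeff_zero]
        · intro hns
          exact absurd (Finset.mem_range.mpr (by omega)) hns
    intro s hs
    exact hu (k - d + 1) s hs (by omega)
  -- conclude
  intro m hm
  rw [X_pow_dvd_iff]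
  intro s hs
  have hmn : m < n := by omega
  have h1 : k - n + 1 ≤ k - m - s := by omega
  have h2 : k - m - s ≤ k := by omega
  have h3 : s ≤ k - (k - m - s) := by omega
  have h4 : (k - m - s) + s = k - m := by omega
  have := key (k - m - s) h1 h2 s h3
  rwa [h4] at this
end

section
/- Let K be a field of characteristic 0 and Σ_{i=0}^{k} P_i(x) f^{(i)}(x) = 0 a linear differential equation of order k > 0 with polynomial coefficients (so P_k ≠ 0). Let F = {(x-a_i)^{e_i} : 1 ≤ i ≤ s} be a family of pairwise distinct shifted powers with e_i ≥ k for all i, all of which satisfy the equation. Then the polynomial Π_{i=1}^{s} (x - a_i) divides P_k. -/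
open Polynomial Finset

lemma descF_cast {K : Type*} [Field K] [CharZero K] (e j : ℕ) (h : j ≤ e) :
    ((e.descFactorial j : ℕ) : K) = ∏ m ∈ Finset.range j, ((e : K) - (m : K)) := by
  rw [Nat.descFactorial_eq_prod_range, Nat.cast_prod]
  refine Finset.prod_congr rfl fun m hm => ?_
  rw [Finset.mem_range] at hm
  rw [Nat.cast_sub (by omega)]

lemma core {K : Type*} [Field K] [CharZero K] (k : ℕ) (P : ℕ → Polynomial K)
    (t : ℕ) (E : Fin t → ℕ) (hE : Function.Injective E) (hEk : ∀ i, k ≤ E i)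
    (hQ : ∀ i, ∑ j ∈ Finset.range (k + 1),
        ((E i).descFactorial j : K) • (P j * X ^ (k - j)) = 0) :
    (X : Polynomial K) ^ t ∣ P k := by
  rw [X_pow_dvd_iff]
  intro r hr
  set b := k - r with hb
  have hbk : b ≤ k := Nat.sub_le _ _
  have hkbr : k - b ≤ r := by omega
  set c : ℕ → K := fun l => (P (b + l)).coeff (r - (k - (b + l))) with hc
  set M : ℕ → Polynomial K := fun l => ∏ m ∈ Finset.range l, (X - C ((b + m : ℕ) : K)) with hM
  set g : Polynomial K := ∑ l ∈ Finset.range (k - b + 1), C (c l) * M l with hg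
  have hMmonic : ∀ l, (M l).Monic := fun l => monic_prod_of_monic _ _ fun m _ => monic_X_sub_C _
  have hMdeg : ∀ l, (M l).natDegree = l := by
    intro l
    rw [hM]
    rw [natDegree_prod _ _ fun m _ => X_sub_C_ne_zero _]
    simp only [natDegree_X_sub_C, Finset.sum_const, Finset.card_range, smul_eq_mul, mul_one]
  have hterm_deg : ∀ l, (C (c l) * M l).natDegree ≤ l := fun l =>
    (natDegree_mul_le).trans (by simp [hMdeg l])
  -- evaluation
  have heval : ∀ i, g.eval ((E i : ℕ) : K) = 0 := by
    intro i
    set e := E i with he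
    have hek : k ≤ e := hEk i
    have h0 := congrArg (fun p => Polynomial.coeff p r) (hQ i)
    simp only [finset_sum_coeff, coeff_smul, coeff_zero, smul_eq_mul] at h0
    have hsplit : k + 1 = b + (k - b + 1) := by omega
    rw [hsplit, Finset.sum_range_add] at h0
    have h1 : ∀ j ∈ Finset.range b,
        (e.descFactorial j : K) * (P j * X ^ (k - j)).coeff r = 0 := by
      intro j hj
      rw [Finset.mem_range] at hj
      rw [coeff_mul_X_pow', if_neg (by omega), mul_zero]
    rw [Finset.sum_eq_zero h1, zero_add] at h0
    have h2 : ∀ l ∈ Finset.range (k - b + 1),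
        (e.descFactorial (b + l) : K) * (P (b + l) * X ^ (k - (b + l))).coeff r
        = (e.descFactorial b : K) * ((∏ m ∈ Finset.range l, ((e : K) - ((b + m : ℕ) : K))) * c l) := by
      intro l hl
      rw [Finset.mem_range] at hl
      have hble : b + l ≤ e := by omega
      rw [coeff_mul_X_pow', if_pos (by omega)]
      rw [descF_cast e (b + l) hble, Finset.prod_range_add]
      rw [← descF_cast e b (by omega)]
      ring
    rw [Finset.sum_congr rfl h2, ← Finset.mul_sum] at h0
    have hD : (e.descFactorial b : K) ≠ 0 := by
      have : e.descFactorial b ≠ 0 := by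
        rw [Ne, Nat.descFactorial_eq_zero_iff_lt]
        omega
      exact_mod_cast this
    have h3 := (mul_eq_zero.mp h0).resolve_left hD
    rw [hg]
    rw [eval_finset_sum]
    rw [← h3]
    refine Finset.sum_congr rfl fun l hl => ?_
    rw [eval_mul, eval_C, hM, eval_prod, mul_comm]
    congr 1
    refine Finset.prod_congr rfl fun m hm => ?_
    simp
  -- g = 0
  have hinj : Function.Injective (fun i : Fin t => ((E i : ℕ) : K)) := by
    intro i j h
    exact hE (Nat.cast_injective h)
  have hg0 : g = 0 := by
    refine Polynomial.eq_zero_of_natDegree_lt_card_of_eval_eq_zero g hinj heval ?_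
    have : g.natDegree ≤ k - b :=
      natDegree_sum_le_of_forall_le _ _ fun l hl => by
        rw [Finset.mem_range] at hl
        exact (hterm_deg l).trans (by omega)
    simp only [Fintype.card_fin]
    omega
  -- coefficient extraction
  have hco := congrArg (fun p => p.coeff (k - b)) hg0
  simp only [coeff_zero, hg, finset_sum_coeff] at hco
  rw [Finset.sum_eq_single_of_mem (k - b) (Finset.mem_range.mpr (by omega))] at hco
  · have hM1 : (M (k - b)).coeff (k - b) = 1 := by
      have h := (hMmonic (k - b)).coeff_natDegree
      rwa [hMdeg] at h
    rw [coeff_C_mul, hM1, mul_one] at hco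
    have hbkb : b + (k - b) = k := by omega
    rw [hc] at hco
    simp only [hbkb, Nat.sub_self, Nat.sub_zero] at hco
    exact hco
  · intro l hl hne
    rw [Finset.mem_range] at hl
    exact coeff_eq_zero_of_natDegree_lt (lt_of_le_of_lt (hterm_deg l) (by omega))
lemma core_a {K : Type*} [Field K] [CharZero K] (k : ℕ) (P : ℕ → Polynomial K) (aa : K)
    (t : ℕ) (E : Fin t → ℕ) (hE : Function.Injective E) (hEk : ∀ i, k ≤ E i)
    (hQ : ∀ i, ∑ j ∈ Finset.range (k + 1),
        ((E i).descFactorial j : K) • (P j * (X - C aa) ^ (k - j)) = 0) :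
    (X - C aa) ^ t ∣ P k := by
  have key : (X : Polynomial K) ^ t ∣ taylor aa (P k) := by
    refine core k (fun j => taylor aa (P j)) t E hE hEk fun i => ?_
    have h := congrArg (taylor aa) (hQ i)
    rw [map_sum, map_zero] at h
    rw [← h]
    refine Finset.sum_congr rfl fun j hj => ?_
    rw [map_smul]
    congr 1
    rw [taylor_mul]
    congr 1
    rw [taylor_apply, pow_comp, sub_comp, X_comp, C_comp, add_sub_cancel_right]
  obtain ⟨u, hu⟩ := key
  refine ⟨taylor (-aa) u, ?_⟩
  have h1 : taylor (-aa) (taylor aa (P k)) = P k := by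
    rw [taylor_taylor, neg_add_cancel, taylor_zero]
  rw [← h1, hu, ← taylorAlgHom_apply, map_mul, map_pow, taylorAlgHom_apply,
    taylorAlgHom_apply, taylor_X, C_neg, ← sub_eq_add_neg]

theorem stmt5 (K : Type*) [Field K] [CharZero K] (k s : ℕ) (hk : 0 < k)
    (P : ℕ → Polynomial K) (hPk : P k ≠ 0)
    (a : Fin s → K) (e : Fin s → ℕ)
    (hdist : Function.Injective (fun i => (a i, e i)))
    (hbig : ∀ i, k ≤ e i)
    (hsol : ∀ i : Fin s,
      ∑ j ∈ Finset.range (k + 1), P j * derivative^[j] ((X - C (a i)) ^ (e i)) = 0) :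
    (∏ i : Fin s, (X - C (a i))) ∣ P k := by
  classical
  -- Step 1: divide each solution identity by (X - C (a i)) ^ (e i - k)
  have hQ : ∀ i : Fin s, ∑ j ∈ Finset.range (k + 1),
      ((e i).descFactorial j : K) • (P j * (X - C (a i)) ^ (k - j)) = 0 := by
    intro i
    have h := hsol i
    have hfac : ∑ j ∈ Finset.range (k + 1), P j * derivative^[j] ((X - C (a i)) ^ (e i))
        = (∑ j ∈ Finset.range (k + 1),
            ((e i).descFactorial j : K) • (P j * (X - C (a i)) ^ (k - j)))
          * (X - C (a i)) ^ (e i - k) := by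
      rw [Finset.sum_mul]
      refine Finset.sum_congr rfl fun j hj => ?_
      rw [Finset.mem_range] at hj
      have h3 : k - j + (e i - k) = e i - j := by have h4 := hbig i; omega
      rw [iterate_derivative_X_sub_pow, mul_smul_comm, Nat.cast_smul_eq_nsmul,
        smul_mul_assoc, mul_assoc, ← pow_add, h3]
    rw [hfac] at h
    rcases mul_eq_zero.mp h with h' | h'
    · exact h'
    · exact absurd h' (pow_ne_zero _ (X_sub_C_ne_zero _))
  -- Step 2: group the product by the values of a
  have hprod : (∏ i : Fin s, (X - C (a i)))
      = ∏ b ∈ Finset.univ.image a,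
          (X - C b) ^ (Finset.univ.filter (fun i => a i = b)).card := by
    rw [← Finset.prod_fiberwise_of_maps_to (g := a) (fun i _ => Finset.mem_image_of_mem a
      (Finset.mem_univ i))]
    refine Finset.prod_congr rfl fun b hb => ?_
    rw [Finset.prod_congr rfl (fun i hi => ?_), Finset.prod_const]
    rw [Finset.mem_filter] at hi
    rw [hi.2]
  rw [hprod]
  refine Finset.prod_dvd_of_coprime ?_ ?_
  · intro b hb b' hb' hne
    exact (pairwise_coprime_X_sub_C Function.injective_id hne).pow
  · intro b hb
    set T := Finset.univ.filter (fun i => a i = b) with hT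
    refine core_a k P b T.card (fun j => e (T.equivFin.symm j)) ?_ (fun j => hbig _) ?_
    · intro j1 j2 hj
      have ha1 : a ((T.equivFin.symm j1) : Fin s) = b := (Finset.mem_filter.mp
        (T.equivFin.symm j1).2).2
      have ha2 : a ((T.equivFin.symm j2) : Fin s) = b := (Finset.mem_filter.mp
        (T.equivFin.symm j2).2).2
      have hj' : e ((T.equivFin.symm j1) : Fin s) = e ((T.equivFin.symm j2) : Fin s) := hj
      have hpair : (a ((T.equivFin.symm j1) : Fin s), e ((T.equivFin.symm j1) : Fin s))
          = (a ((T.equivFin.symm j2) : Fin s), e ((T.equivFin.symm j2) : Fin s)) := by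
        rw [ha1, ha2, hj']
      have h5 := hdist hpair
      exact T.equivFin.symm.injective (Subtype.ext h5)
    · intro j
      have ha1 : a ((T.equivFin.symm j) : Fin s) = b := (Finset.mem_filter.mp
        (T.equivFin.symm j).2).2
      rw [← ha1]
      exact hQ _
end

section
/- Let F = {(x - a_i)^{e_i} : 1 ≤ i ≤ s} be a family of pairwise distinct shifted powers with a_i ∈ ℂ and e_i ≥ s(s-1)/2 for all i. Then the elements of F are linearly independent over ℂ. -/
/-!
The Wronskian of the family is nonzero, by induction on `s`. If it vanished while none of
its maximal minors does, differentiating the cofactor expansion shows that the cofactors `pᵢ`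
of its last row satisfy `p₀ pᵢ' = p₀' pᵢ`; hence they are proportional, and the family
satisfies a linear relation with all coefficients nonzero. If all shifts agree, this
contradicts the distinctness of the exponents. Otherwise compare root multiplicities at a
shift `α = a_l ≠ a_0`. Each minor is `∏ (X - a_i) ^ (e_i - (s - 2))` times a polynomial of
degree at most `(s - 1).choose 2`, so the minor omitting `0` vanishes at `α` to order at least
`S = ∑_{a_i = α} (e_i - (s - 2))`, while the one omitting `l` vanishes to order at most
`S - (e_l - (s - 2)) + (s - 1).choose 2`. Proportional cofactors have equal orders, which
forces `e_l < s.choose 2`.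
-/

open Polynomial

lemma Fin.sum_sub_eq_choose_two (n : ℕ) : ∑ m : Fin n, (n - 1 - m) = n.choose 2 := by
  rw [Fin.sum_univ_eq_sum_range (fun m => n - 1 - m) n, Finset.sum_range_reflect (fun m => m) n,
    Finset.sum_range_id, Nat.choose_two_right]

lemma Matrix.det_of_snoc {R : Type*} [CommRing R] {n : ℕ} (U : Fin n → Fin (n + 1) → R)
    (r : Fin (n + 1) → R) :
    (of (Fin.snoc U r)).det = ∑ i : Fin (n + 1),
      (-1) ^ (n + (i : ℕ)) * r i * (of fun m k => U m (i.succAbove k)).det := by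
  rw [det_succ_row _ (Fin.last n)]
  refine Finset.sum_congr rfl fun i _ => ?_
  congr 2
  · simp
  · ext m k
    simp

namespace Polynomial

open Matrix

noncomputable section

section CommRing

variable {R : Type*} [CommRing R]

def wronskianMatrix {n : ℕ} (f : Fin n → R[X]) : Matrix (Fin n) (Fin n) R[X] :=
  of fun j i => derivative^[j] (f i)

def wronskianCofactor {n : ℕ} (f : Fin (n + 1) → R[X]) (i : Fin (n + 1)) : R[X] :=
  (-1) ^ (n + (i : ℕ)) * (wronskianMatrix (f ∘ i.succAbove)).det

lemma sum_wronskianCofactor_mul {n : ℕ} (f : Fin (n + 1) → R[X]) (r : Fin (n + 1) → R[X]) :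
    ∑ i, wronskianCofactor f i * r i
      = (of (Fin.snoc (fun (m : Fin n) i => derivative^[m] (f i)) r)).det := by
  rw [det_of_snoc]
  refine Finset.sum_congr rfl fun (i : Fin (n + 1)) _ => ?_
  rw [wronskianCofactor, mul_right_comm]
  rfl

section Cofactor

variable {n : ℕ} {f : Fin (n + 1) → R[X]}

lemma sum_wronskianCofactor_mul_iterate_derivative (hW : (wronskianMatrix f).det = 0) {k : ℕ}
    (hk : k ≤ n) : ∑ i, wronskianCofactor f i * derivative^[k] (f i) = 0 := by
  rw [sum_wronskianCofactor_mul]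
  obtain hk | rfl := hk.lt_or_eq
  · refine det_zero_of_row_eq (Fin.castSucc_lt_last ⟨k, hk⟩).ne ?_
    funext i
    simp only [of_apply, Fin.snoc_castSucc, Fin.snoc_last]
  · convert hW using 2
    ext j i
    induction j using Fin.lastCases <;> simp [wronskianMatrix]

lemma sum_derivative_wronskianCofactor_mul_iterate_derivative
    (hW : (wronskianMatrix f).det = 0) {k : ℕ} (hk : k < n) :
    ∑ i, derivative (wronskianCofactor f i) * derivative^[k] (f i) = 0 := by
  have h := congrArg derivative (sum_wronskianCofactor_mul_iterate_derivative hW hk.le)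
  simpa only [derivative_sum, derivative_mul, Finset.sum_add_distrib, derivative_zero,
    ← Function.iterate_succ_apply' derivative,
    sum_wronskianCofactor_mul_iterate_derivative hW hk, add_zero] using h

end Cofactor

lemma natDegree_det_le {ι : Type*} [Fintype ι] [DecidableEq ι] (M : Matrix ι ι R[X])
    (b : ι → ℕ) (hb : ∀ j i, (M j i).natDegree ≤ b j) :
    M.det.natDegree ≤ ∑ j, b j := by
  rw [det_apply']
  refine natDegree_sum_le_of_forall_le _ _ fun σ _ => ?_
  refine natDegree_mul_le.trans ?_
  rw [natDegree_intCast, zero_add]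
  refine (natDegree_prod_le _ _).trans ?_
  calc ∑ i, (M (σ i) i).natDegree ≤ ∑ i, b (σ i) := Finset.sum_le_sum fun i _ => hb _ i
    _ = ∑ j, b j := Equiv.sum_comp σ b

lemma det_wronskianMatrix_X_sub_C_pow {n : ℕ} (b : Fin n → R) (d : Fin n → ℕ)
    (hd : ∀ i, n - 1 ≤ d i) :
    ∃ Q : R[X], (wronskianMatrix fun i => (X - C (b i)) ^ d i).det
      = (∏ i, (X - C (b i)) ^ (d i - (n - 1))) * Q ∧ Q.natDegree ≤ n.choose 2 := by
  set M : Matrix (Fin n) (Fin n) R[X] :=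
    of fun m i => C ((d i).descFactorial m : R) * (X - C (b i)) ^ (n - 1 - m)
  have hW : wronskianMatrix (fun i => (X - C (b i)) ^ d i)
      = of fun m i => (X - C (b i)) ^ (d i - (n - 1)) * M m i := by
    ext1 m i
    have hexp : d i - m = d i - (n - 1) + (n - 1 - m) := by have := hd i; omega
    simp only [wronskianMatrix, M, of_apply, iterate_derivative_X_sub_pow, hexp, pow_add,
      nsmul_eq_mul, ← C_eq_natCast]
    ring
  refine ⟨M.det, by rw [hW, det_mul_row], ?_⟩
  refine (natDegree_det_le M _ fun m i => ?_).trans (Fin.sum_sub_eq_choose_two n).le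
  exact (natDegree_C_mul_le _ _).trans
    ((natDegree_pow_le_of_le _ (natDegree_X_sub_C_le _)).trans_eq (mul_one _))

lemma linearIndependent_X_sub_C_pow {ι : Type*} (α : R) {e : ι → ℕ}
    (he : Function.Injective e) : LinearIndependent R fun i => (X - C α) ^ e i := by
  refine LinearIndependent.of_comp (taylor α) ?_
  have h : (taylor α ∘ fun i => (X - C α) ^ e i) = basisMonomials R ∘ e := by
    ext1 i
    simp [taylor_X, coe_basisMonomials, X_pow_eq_monomial]
  rw [h]
  exact (basisMonomials R).linearIndependent.comp e he

end CommRing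

section IsDomain

variable {R : Type*} [CommRing R] [IsDomain R]

lemma linearIndependent_of_det_wronskianMatrix_ne_zero {n : ℕ} {f : Fin n → R[X]}
    (hW : (wronskianMatrix f).det ≠ 0) : LinearIndependent R f := by
  refine Fintype.linearIndependent_iff.mpr fun c hc i => ?_
  have hv : wronskianMatrix f *ᵥ (fun i => C (c i)) = 0 := by
    funext j
    calc ∑ i, derivative^[j] (f i) * C (c i) = derivative^[j] (∑ i, c i • f i) := by
          rw [iterate_derivative_sum]
          exact Finset.sum_congr rfl fun i _ => by
            rw [smul_eq_C_mul, iterate_derivative_C_mul, mul_comm]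
      _ = 0 := by rw [hc, iterate_derivative_zero]
  exact C_eq_zero.mp (congrFun (eq_zero_of_mulVec_eq_zero hW hv) i)

lemma rootMultiplicity_C_mul {c : R} (hc : c ≠ 0) (p : R[X]) (α : R) :
    rootMultiplicity α (C c * p) = rootMultiplicity α p := by
  rcases eq_or_ne p 0 with rfl | hp
  · rw [mul_zero]
  · rw [rootMultiplicity_mul (mul_ne_zero (C_ne_zero.mpr hc) hp), rootMultiplicity_C, zero_add]

lemma rootMultiplicity_prod_X_sub_C_pow [DecidableEq R] {ι : Type*} (s : Finset ι)
    (b : ι → R) (d : ι → ℕ) (α : R) :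
    rootMultiplicity α (∏ i ∈ s, (X - C (b i)) ^ d i)
      = ∑ i ∈ s, if b i = α then d i else 0 := by
  rw [← count_roots, roots_prod _ _ (Finset.prod_ne_zero_iff.mpr fun i _ =>
    pow_ne_zero _ (X_sub_C_ne_zero _)), Multiset.count_bind]
  simp [roots_pow, Multiset.count_singleton, eq_comm]

lemma rootMultiplicity_det_wronskianMatrix_X_sub_C_pow [DecidableEq R] {n : ℕ}
    (b : Fin n → R) (d : Fin n → ℕ) (hd : ∀ i, n - 1 ≤ d i)
    (hW : (wronskianMatrix fun i => (X - C (b i)) ^ d i).det ≠ 0) (α : R) :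
    ∑ i, (if b i = α then d i - (n - 1) else 0)
        ≤ rootMultiplicity α (wronskianMatrix fun i => (X - C (b i)) ^ d i).det ∧
      rootMultiplicity α (wronskianMatrix fun i => (X - C (b i)) ^ d i).det
        ≤ ∑ i, (if b i = α then d i - (n - 1) else 0) + n.choose 2 := by
  obtain ⟨Q, hQ, hdeg⟩ := det_wronskianMatrix_X_sub_C_pow b d hd
  rw [hQ] at hW ⊢
  rw [rootMultiplicity_mul hW, rootMultiplicity_prod_X_sub_C_pow]
  refine ⟨Nat.le_add_right _ _, Nat.add_le_add_left ?_ _⟩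
  calc rootMultiplicity α Q = Q.roots.count α := (count_roots Q).symm
    _ ≤ Multiset.card Q.roots := Multiset.count_le_card _ _
    _ ≤ n.choose 2 := (card_roots' Q).trans hdeg

section Cofactor

variable {n : ℕ} {f : Fin (n + 1) → R[X]}

lemma rootMultiplicity_wronskianCofactor (i : Fin (n + 1)) (α : R) :
    rootMultiplicity α (wronskianCofactor f i)
      = rootMultiplicity α (wronskianMatrix (f ∘ i.succAbove)).det := by
  rw [wronskianCofactor, show (-1 : R[X]) ^ (n + (i : ℕ)) = C ((-1) ^ (n + (i : ℕ))) by simp,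
    rootMultiplicity_C_mul (pow_ne_zero _ (neg_ne_zero.mpr one_ne_zero))]

/- The first `n` rows of the Wronskian matrix kill both the cofactor vector `p` and its
derivative, hence also `p₀ p' - p₀' p`; that vector has first entry `0`, and the remaining
columns of those rows form a minor of determinant `±p₀ ≠ 0`. -/
lemma wronskianCofactor_mul_derivative_eq (hW : (wronskianMatrix f).det = 0)
    (h0 : wronskianCofactor f 0 ≠ 0) (i : Fin (n + 1)) :
    wronskianCofactor f 0 * derivative (wronskianCofactor f i)
      = derivative (wronskianCofactor f 0) * wronskianCofactor f i := by
  set p := wronskianCofactor f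
  set v : Fin (n + 1) → R[X] := fun i => p 0 * derivative (p i) - derivative (p 0) * p i
  have hv0 : v 0 = 0 := by ring
  have hv : wronskianMatrix (f ∘ Fin.succ) *ᵥ (v ∘ Fin.succ) = 0 := by
    funext m
    have hm : ∑ i, derivative^[m] (f i) * v i = 0 := by
      calc ∑ i, derivative^[m] (f i) * v i
          = p 0 * ∑ i, derivative (p i) * derivative^[m] (f i)
            - derivative (p 0) * ∑ i, p i * derivative^[m] (f i) := by
            simp only [v, Finset.mul_sum, ← Finset.sum_sub_distrib]
            exact Finset.sum_congr rfl fun _ _ => by ring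
        _ = 0 := by
          rw [sum_derivative_wronskianCofactor_mul_iterate_derivative hW m.isLt,
            sum_wronskianCofactor_mul_iterate_derivative hW m.isLt.le, mul_zero, mul_zero,
            sub_zero]
    rwa [Fin.sum_univ_succ, hv0, mul_zero, zero_add] at hm
  have hdet : (wronskianMatrix (f ∘ Fin.succ)).det ≠ 0 := by
    simpa [p, wronskianCofactor] using h0
  refine sub_eq_zero.mp ?_
  induction i using Fin.cases with
  | zero => exact hv0
  | succ j => exact congrFun (eq_zero_of_mulVec_eq_zero hdet hv) j

end Cofactor

lemma sub_le_choose_two_of_wronskianCofactor_eq_C_mul {n : ℕ} {a : Fin (n + 1) → R}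
    {e : Fin (n + 1) → ℕ} (he : ∀ i, n - 1 ≤ e i)
    (hsub : ∀ i : Fin (n + 1),
      (wronskianMatrix ((fun i => (X - C (a i)) ^ e i) ∘ i.succAbove)).det ≠ 0)
    {l : Fin (n + 1)} (hl : a l ≠ a 0) {c : R} (hc : c ≠ 0)
    (hcof : wronskianCofactor (fun i => (X - C (a i)) ^ e i) l
      = C c * wronskianCofactor (fun i => (X - C (a i)) ^ e i) 0) :
    e l - (n - 1) ≤ n.choose 2 := by
  classical
  have hmult :=
    rootMultiplicity_wronskianCofactor (f := fun i => (X - C (a i)) ^ e i) 0 (a l)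
  rw [← rootMultiplicity_C_mul hc, ← hcof, rootMultiplicity_wronskianCofactor] at hmult
  have h0 := (rootMultiplicity_det_wronskianMatrix_X_sub_C_pow _ _ (fun _ => he _) (hsub 0)
    (a l)).1
  have hl' := (rootMultiplicity_det_wronskianMatrix_X_sub_C_pow _ _ (fun _ => he _) (hsub l)
    (a l)).2
  have hS0 := Fin.sum_univ_succAbove (fun i => if a i = a l then e i - (n - 1) else 0) 0
  have hSl := Fin.sum_univ_succAbove (fun i => if a i = a l then e i - (n - 1) else 0) l
  simp only [Function.comp_def, if_neg (Ne.symm hl), if_true] at h0 hl' hS0 hSl hmult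
  omega

end IsDomain

section Field

variable {K : Type*} [Field K] [CharZero K]

lemma exists_eq_C_mul_of_wronskian_eq_zero {p q : K[X]} (hp : p ≠ 0) (h : wronskian p q = 0) :
    ∃ c : K, q = C c * p := by
  classical
  obtain ⟨p₁, q₁, hp₁, hq₁, hunit⟩ := extract_gcd p q
  set d := gcd p q
  have hd : d ≠ 0 := gcd_ne_zero_of_left hp
  have hcop : IsCoprime p₁ q₁ := (gcd_isUnit_iff p₁ q₁).mp hunit
  have hw : wronskian p q = d ^ 2 * wronskian p₁ q₁ := by
    rw [hp₁, hq₁]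
    simp only [wronskian, derivative_mul]
    ring
  rw [hw, mul_eq_zero, or_iff_right (pow_ne_zero 2 hd), hcop.wronskian_eq_zero_iff] at h
  obtain ⟨u, rfl⟩ := natDegree_eq_zero.mp (derivative_eq_zero.mp h.1)
  obtain ⟨v, rfl⟩ := natDegree_eq_zero.mp (derivative_eq_zero.mp h.2)
  have hu : u ≠ 0 := by rintro rfl; simp [hp₁] at hp
  refine ⟨v / u, ?_⟩
  rw [hp₁, hq₁, ← mul_assoc, mul_comm (C _), mul_assoc, ← C_mul, div_mul_cancel₀ v hu]

section Cofactor

variable {n : ℕ} {f : Fin (n + 1) → K[X]}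

lemma wronskianCofactor_ne_zero {i : Fin (n + 1)}
    (h : (wronskianMatrix (f ∘ i.succAbove)).det ≠ 0) : wronskianCofactor f i ≠ 0 :=
  mul_ne_zero (pow_ne_zero _ (neg_ne_zero.mpr one_ne_zero)) h

lemma exists_sum_smul_eq_zero_of_det_wronskianMatrix_eq_zero
    (hW : (wronskianMatrix f).det = 0)
    (hsub : ∀ i : Fin (n + 1), (wronskianMatrix (f ∘ i.succAbove)).det ≠ 0) :
    ∃ c : Fin (n + 1) → K, (∀ i, c i ≠ 0) ∧ ∑ i, c i • f i = 0 ∧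
      ∀ i, wronskianCofactor f i = C (c i) * wronskianCofactor f 0 := by
  have h0 := wronskianCofactor_ne_zero (hsub 0)
  choose c hc using fun i => exists_eq_C_mul_of_wronskian_eq_zero h0
    (sub_eq_zero.mpr (wronskianCofactor_mul_derivative_eq hW h0 i))
  refine ⟨c, fun i hci => wronskianCofactor_ne_zero (hsub i) (by simp [hc i, hci]), ?_, hc⟩
  have hrel : wronskianCofactor f 0 * ∑ i, c i • f i = 0 := by
    rw [← sum_wronskianCofactor_mul_iterate_derivative hW (Nat.zero_le n), Finset.mul_sum]
    exact Finset.sum_congr rfl fun i _ => by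
      rw [hc i, smul_eq_C_mul, Function.iterate_zero_apply]
      ring
  exact (mul_eq_zero.mp hrel).resolve_left h0

end Cofactor

theorem det_wronskianMatrix_X_sub_C_pow_ne_zero {n : ℕ} (a : Fin n → K) (e : Fin n → ℕ)
    (hinj : Function.Injective fun i => (a i, e i)) (he : ∀ i, n.choose 2 ≤ e i) :
    (wronskianMatrix fun i => (X - C (a i)) ^ e i).det ≠ 0 := by
  induction n with
  | zero => simp [wronskianMatrix]
  | succ n ih =>
    intro hW
    have hch : (n + 1).choose 2 = n + n.choose 2 := by simp [Nat.choose_succ_succ']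
    have hsub (i : Fin (n + 1)) :
        (wronskianMatrix ((fun i => (X - C (a i)) ^ e i) ∘ i.succAbove)).det ≠ 0 :=
      ih (a ∘ i.succAbove) (e ∘ i.succAbove) (hinj.comp Fin.succAbove_right_injective)
        fun j => (Nat.choose_le_choose 2 n.le_succ).trans (he _)
    obtain ⟨c, hc0, hrel, hcof⟩ :=
      exists_sum_smul_eq_zero_of_det_wronskianMatrix_eq_zero hW hsub
    by_cases hsh : ∀ i, a i = a 0
    · have he_inj : Function.Injective e := fun i j hij =>
        hinj (Prod.ext ((hsh i).trans (hsh j).symm) hij)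
      simp only [hsh] at hrel
      exact hc0 0 (Fintype.linearIndependent_iff.mp
        (linearIndependent_X_sub_C_pow (a 0) he_inj) c hrel 0)
    · push Not at hsh
      obtain ⟨l, hl⟩ := hsh
      have hel := sub_le_choose_two_of_wronskianCofactor_eq_C_mul
        (fun i => by have := he i; omega) hsub hl (hc0 l) (hcof l)
      have hl0 : (l : ℕ) ≠ 0 := fun h => hl (congrArg a (Fin.ext h))
      have hle := he l
      have hlt := l.isLt
      omega

end Field

end

end Polynomial

theorem stmt8 (s : ℕ) (a : Fin s → ℂ) (e : Fin s → ℕ)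
    (hdist : Function.Injective (fun i => (a i, e i)))
    (hbig : ∀ i, s * (s - 1) / 2 ≤ e i) :
    LinearIndependent ℂ (fun i : Fin s => (X - C (a i)) ^ (e i)) := by
  simp only [← Nat.choose_two_right] at hbig
  exact linearIndependent_of_det_wronskianMatrix_ne_zero
    (det_wronskianMatrix_X_sub_C_pow_ne_zero a e hdist hbig)
end

section
/- Let d ≥ 1 and define the Waring rank of a univariate polynomial f ∈ ℝ[x] of degree n as the minimal s such that f = Σ_{i=1}^{s} α_i (x + a_i)^n with α_i, a_i ∈ ℝ. Then the real Waring rank of H(x) = (x+1)^{2d+2} − x^{2d+2} equals d+1. -/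
/-!
Write `H = (X + 1)^(m+1) - X^(m+1)` with `m = 2d + 1`. Since `H(x) = (m+1) ∫₀¹ (x + u)^m du`, a
decomposition `H = ∑ αᵢ (X + aᵢ)^m` is the same as a quadrature rule with nodes `aᵢ` and weights
`αᵢ / (m+1)` that integrates every `(X + x)^m`, hence (these span the polynomials of degree
`≤ m`) every polynomial of degree `≤ m` exactly over `[0, 1]`. Gauss–Legendre quadrature, with
nodes the `d + 1` roots of the Legendre polynomial, is such a rule. No rule with `s ≤ d` nodes
is: it would integrate `∏ (X - aᵢ)²`, of degree `2s ≤ m`, to `0`.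
-/

open Polynomial

namespace Polynomial

noncomputable def intervalIntegralₗ (a b : ℝ) : ℝ[X] →ₗ[ℝ] ℝ where
  toFun p := ∫ x in a..b, p.eval x
  map_add' p q := by
    simpa using intervalIntegral.integral_add (p.continuous.intervalIntegrable a b)
      (q.continuous.intervalIntegrable a b)
  map_smul' c p := by simp [intervalIntegral.integral_const_mul]

@[simp]
theorem intervalIntegralₗ_apply (a b : ℝ) (p : ℝ[X]) :
    intervalIntegralₗ a b p = ∫ x in a..b, p.eval x := rfl

theorem intervalIntegralₗ_derivative (a b : ℝ) (p : ℝ[X]) :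
    intervalIntegralₗ a b (derivative p) = p.eval b - p.eval a :=
  intervalIntegral.integral_deriv_eq_sub' _ (_root_.funext fun _ => p.deriv)
    (fun _ _ => p.differentiableAt) p.derivative.continuous.continuousOn

theorem intervalIntegralₗ_sq_pos {a b : ℝ} (hab : a < b) {q : ℝ[X]} (hq : q ≠ 0) :
    0 < intervalIntegralₗ a b (q ^ 2) := by
  obtain ⟨c, hc, hqc⟩ := (Set.Icc_infinite hab).exists_notMem_finset q.roots.toFinset
  have hqc : q.eval c ≠ 0 := by simpa [hq] using hqc
  exact intervalIntegral.integral_pos hab (q ^ 2).continuous.continuousOn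
    (fun x _ => by simpa using sq_nonneg (q.eval x)) ⟨c, hc, by rw [eval_pow]; positivity⟩

theorem intervalIntegralₗ_X_add_C_pow (a b x : ℝ) (m : ℕ) :
    (m + 1) * intervalIntegralₗ a b ((X + C x) ^ m) = (x + b) ^ (m + 1) - (x + a) ^ (m + 1) := by
  have h := intervalIntegral.integral_comp_add_left (fun u : ℝ => u ^ m) (a := a) (b := b) x
  simp only [integral_pow] at h
  rw [intervalIntegralₗ_apply]
  simp only [eval_pow, eval_add, eval_X, eval_C, add_comm _ x, h]
  field_simp

theorem linearMap_eq_zero_of_forall_X_add_C_pow {K : Type*} [Field K] [CharZero K]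
    (Λ : K[X] →ₗ[K] K) {n : ℕ} (h : ∀ x : K, Λ ((X + C x) ^ n) = 0) {p : K[X]}
    (hp : p.natDegree ≤ n) : Λ p = 0 := by
  -- `G` is the polynomial `x ↦ Λ ((X + x)^n)`; its coefficients are `(n choose k) Λ (X^(n-k))`.
  set G : K[X] := ∑ k ∈ Finset.range (n + 1), C (n.choose k * Λ (X ^ (n - k))) * X ^ k
  have hG : G = 0 := Polynomial.funext fun x => by
    have hx := h x
    rw [add_comm, add_pow, map_sum] at hx
    rw [eval_zero, ← hx, eval_finsetSum]
    refine Finset.sum_congr rfl fun k _ => ?_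
    rw [← C_pow, ← map_natCast C, mul_right_comm, ← C_mul, ← smul_eq_C_mul (x ^ k * _), map_smul]
    simp only [eval_mul, eval_C, eval_pow, eval_X, smul_eq_mul]
    ring
  have hmon : ∀ j ≤ n, Λ (X ^ j) = 0 := fun j hj => by
    have hcoeff := congrArg (coeff · (n - j)) hG
    simp only [G, finsetSum_coeff, Finset.sum_ite_eq, coeff_C_mul_X_pow, coeff_zero] at hcoeff
    rw [if_pos (by simp), Nat.sub_sub_self hj] at hcoeff
    exact (mul_eq_zero.mp hcoeff).resolve_left (by exact_mod_cast (Nat.choose_pos (by omega)).ne')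
  rw [p.as_sum_range' (n + 1) (by omega), map_sum]
  refine Finset.sum_eq_zero fun j hj => ?_
  rw [← C_mul_X_pow_eq_monomial, ← smul_eq_C_mul, map_smul, hmon j (by simp at hj; omega),
    smul_zero]

theorem eval_iterate_derivative_eq_zero_of_pow_dvd {R : Type*} [CommRing R] {p : R[X]} {r : R}
    {n k : ℕ} (hp : (X - C r) ^ n ∣ p) (hk : k < n) : (derivative^[k] p).eval r = 0 := by
  obtain ⟨g, hg⟩ :=
    (dvd_pow_self _ (by omega)).trans (pow_sub_dvd_iterate_derivative_of_pow_dvd k hp)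
  simp [hg]

theorem card_roots_le_card_roots_iterate_derivative_add (p : ℝ[X]) (k : ℕ) :
    Multiset.card p.roots ≤ Multiset.card (derivative^[k] p).roots + k := by
  induction k with
  | zero => simp
  | succ k ih =>
    rw [Function.iterate_succ_apply']
    have := card_roots_le_derivative (derivative^[k] p)
    omega

theorem intervalIntegralₗ_iterate_derivative_mul {a b : ℝ} {F : ℝ[X]} {k : ℕ}
    (hF : ∀ j < k, (derivative^[j] F).eval a = 0 ∧ (derivative^[j] F).eval b = 0) (q : ℝ[X]) :
    intervalIntegralₗ a b (derivative^[k] F * q) =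
      (-1) ^ k * intervalIntegralₗ a b (F * derivative^[k] q) := by
  induction k generalizing q with
  | zero => simp
  | succ k ih =>
    obtain ⟨ha, hb⟩ := hF k k.lt_succ_self
    have hparts : derivative^[k + 1] F * q =
        derivative (derivative^[k] F * q) - derivative^[k] F * derivative q := by
      rw [derivative_mul, Function.iterate_succ_apply']
      ring
    rw [hparts, map_sub, intervalIntegralₗ_derivative, ih (fun j hj => hF j (by omega)),
      Function.iterate_succ_apply]
    simp [ha, hb, pow_succ]

variable (a b : ℝ)

/-- Rodrigues' formula: up to a constant factor, this is the `n`-th Legendre polynomial for the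
interval `[a, b]`. -/
noncomputable def rodrigues (n : ℕ) : ℝ[X] := derivative^[n] (((X - C a) * (X - C b)) ^ n)

theorem intervalIntegralₗ_rodrigues_mul_eq_zero {n : ℕ} {q : ℝ[X]} (hq : q.natDegree < n) :
    intervalIntegralₗ a b (rodrigues a b n * q) = 0 := by
  have hvanish : ∀ j < n, (derivative^[j] (((X - C a) * (X - C b)) ^ n)).eval a = 0 ∧
      (derivative^[j] (((X - C a) * (X - C b)) ^ n)).eval b = 0 := fun j hj =>
    ⟨eval_iterate_derivative_eq_zero_of_pow_dvd (by rw [mul_pow]; exact dvd_mul_right _ _) hj,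
      eval_iterate_derivative_eq_zero_of_pow_dvd (by rw [mul_pow]; exact dvd_mul_left _ _) hj⟩
  rw [rodrigues, intervalIntegralₗ_iterate_derivative_mul hvanish, iterate_derivative_eq_zero hq]
  simp

theorem natDegree_X_sub_C_mul_X_sub_C_pow (n : ℕ) :
    (((X - C a) * (X - C b)) ^ n).natDegree = 2 * n := by
  rw [((monic_X_sub_C a).mul (monic_X_sub_C b)).natDegree_pow,
    (monic_X_sub_C a).natDegree_mul (monic_X_sub_C b)]
  simp only [natDegree_X_sub_C]
  ring

theorem coeff_rodrigues_ne_zero (n : ℕ) : (rodrigues a b n).coeff n ≠ 0 := by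
  have hmonic := ((monic_X_sub_C a).mul (monic_X_sub_C b)).pow n
  rw [rodrigues, coeff_iterate_derivative, ← two_mul, ← natDegree_X_sub_C_mul_X_sub_C_pow a b n,
    hmonic.coeff_natDegree, natDegree_X_sub_C_mul_X_sub_C_pow]
  simp [Nat.descFactorial_eq_zero_iff_lt, two_mul]

theorem rodrigues_ne_zero (n : ℕ) : rodrigues a b n ≠ 0 := fun h =>
  coeff_rodrigues_ne_zero a b n (by rw [h, coeff_zero])

theorem natDegree_rodrigues (n : ℕ) : (rodrigues a b n).natDegree = n := by
  refine le_antisymm ?_ (le_natDegree_of_ne_zero (coeff_rodrigues_ne_zero a b n))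
  have := natDegree_iterate_derivative (((X - C a) * (X - C b)) ^ n) n
  rw [natDegree_X_sub_C_mul_X_sub_C_pow] at this
  rw [rodrigues]
  omega

theorem card_roots_rodrigues (n : ℕ) : Multiset.card (rodrigues a b n).roots = n := by
  refine le_antisymm ((card_roots' _).trans (natDegree_rodrigues a b n).le) ?_
  have := card_roots_le_card_roots_iterate_derivative_add (((X - C a) * (X - C b)) ^ n) n
  have h2 : Multiset.card (((X - C a) * (X - C b)) ^ n).roots = 2 * n := by
    simp [roots_mul, X_sub_C_ne_zero, mul_comm]
  rw [rodrigues]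
  omega

def IsExactQuadrature (a b : ℝ) {s : ℕ} (t w : Fin s → ℝ) (m : ℕ) : Prop :=
  ∀ p : ℝ[X], p.natDegree ≤ m → intervalIntegralₗ a b p = ∑ i, w i * p.eval (t i)

variable {a b}

theorem nodup_roots_of_forall_intervalIntegralₗ_mul_eq_zero (hab : a < b) {L : ℝ[X]} (hL : L ≠ 0)
    (horth : ∀ q : ℝ[X], q.natDegree < L.natDegree → intervalIntegralₗ a b (L * q) = 0) :
    L.roots.Nodup := by
  classical
  -- A double root `r` gives `L = (X - r)² g` with `∫ L g = ∫ ((X - r) g)² > 0`.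
  refine Multiset.nodup_iff_count_le_one.2 fun r => ?_
  rw [count_roots]
  by_contra! hr
  obtain ⟨g, rfl⟩ := (le_rootMultiplicity_iff hL).1 hr
  have hg : g ≠ 0 := right_ne_zero_of_mul hL
  have hdeg : g.natDegree < ((X - C r) ^ 2 * g).natDegree := by
    rw [natDegree_mul (pow_ne_zero _ (X_sub_C_ne_zero r)) hg, natDegree_pow, natDegree_X_sub_C]
    omega
  have hsq : (X - C r) ^ 2 * g * g = ((X - C r) * g) ^ 2 := by ring
  have hpos := intervalIntegralₗ_sq_pos hab (mul_ne_zero (X_sub_C_ne_zero r) hg)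
  rw [← hsq, horth g hdeg] at hpos
  exact hpos.false

theorem exists_isExactQuadrature_of_monic_orthogonal {L : ℝ[X]} {n : ℕ} (hL : L.Monic)
    (hdeg : L.natDegree = n + 1) (hroots : L.roots.Nodup) (hcard : Multiset.card L.roots = n + 1)
    (horth : ∀ q : ℝ[X], q.natDegree ≤ n → intervalIntegralₗ a b (L * q) = 0) :
    ∃ t w : Fin (n + 1) → ℝ, IsExactQuadrature a b t w (2 * n + 1) := by
  classical
  have hcard' : L.roots.toFinset.card = n + 1 := by
    rw [Multiset.toFinset_card_of_nodup hroots, hcard]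
  set t : Fin (n + 1) → ℝ := ⇑(L.roots.toFinset.orderEmbOfFin hcard')
  have ht : ∀ i, L.eval (t i) = 0 := fun i => by
    have := L.roots.toFinset.orderEmbOfFin_mem hcard' i
    rwa [Multiset.mem_toFinset, mem_roots hL.ne_zero] at this
  have htinj : Set.InjOn t (Finset.univ : Finset (Fin (n + 1))) :=
    (L.roots.toFinset.orderEmbOfFin hcard').injective.injOn
  refine ⟨t, fun i => intervalIntegralₗ a b (Lagrange.basis Finset.univ t i), fun p hp => ?_⟩
  have hdecomp := modByMonic_add_div p L
  have hquot : intervalIntegralₗ a b (L * (p /ₘ L)) = 0 := horth _ (by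
    rw [natDegree_divByMonic p hL, hdeg]; omega)
  have hrem : (p %ₘ L).degree < (Finset.univ : Finset (Fin (n + 1))).card := by
    simpa [degree_eq_natDegree hL.ne_zero, hdeg] using degree_modByMonic_lt p hL
  have heval : ∀ i, (p %ₘ L).eval (t i) = p.eval (t i) := fun i => by
    conv_rhs => rw [← hdecomp]
    simp [ht i]
  conv_lhs => rw [← hdecomp, map_add, hquot, add_zero, Lagrange.eq_interpolate htinj hrem,
    Lagrange.interpolate_apply, map_sum]
  refine Finset.sum_congr rfl fun i _ => ?_
  rw [← smul_eq_C_mul, map_smul, smul_eq_mul, mul_comm, heval i]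

theorem IsExactQuadrature.mono {s : ℕ} {t w : Fin s → ℝ} {m m' : ℕ}
    (h : IsExactQuadrature a b t w m) (hm : m' ≤ m) : IsExactQuadrature a b t w m' :=
  fun p hp => h p (hp.trans hm)

theorem exists_isExactQuadrature (hab : a < b) (n : ℕ) :
    ∃ t w : Fin (n + 1) → ℝ, IsExactQuadrature a b t w (2 * n + 1) := by
  set R := rodrigues a b (n + 1)
  have hR : R ≠ 0 := rodrigues_ne_zero a b (n + 1)
  have hc : R.leadingCoeff⁻¹ ≠ 0 := inv_ne_zero (leadingCoeff_ne_zero.2 hR)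
  have horth : ∀ q : ℝ[X], q.natDegree < n + 1 → intervalIntegralₗ a b (R * q) = 0 :=
    fun q hq => intervalIntegralₗ_rodrigues_mul_eq_zero a b hq
  refine exists_isExactQuadrature_of_monic_orthogonal (L := C R.leadingCoeff⁻¹ * R)
    (monic_C_mul_of_mul_leadingCoeff_eq_one (inv_mul_cancel₀ (leadingCoeff_ne_zero.2 hR)))
    (by rw [natDegree_C_mul hc, natDegree_rodrigues]) ?_ ?_ fun q hq => ?_
  · rw [roots_C_mul _ hc]
    exact nodup_roots_of_forall_intervalIntegralₗ_mul_eq_zero hab hR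
      (natDegree_rodrigues a b (n + 1) ▸ horth)
  · rw [roots_C_mul _ hc, card_roots_rodrigues]
  · rw [mul_assoc, mul_left_comm]
    exact horth _ ((natDegree_C_mul_le _ _).trans_lt (by omega))

theorem not_isExactQuadrature (hab : a < b) {s : ℕ} (t w : Fin s → ℝ) :
    ¬ IsExactQuadrature a b t w (2 * s) := by
  intro h
  set q : ℝ[X] := ∏ i, (X - C (t i))
  have hq : q.Monic := monic_prod_of_monic _ _ fun i _ => monic_X_sub_C (t i)
  have hdeg : (q ^ 2).natDegree ≤ 2 * s := by
    rw [hq.natDegree_pow, natDegree_prod_of_monic _ _ fun i _ => monic_X_sub_C (t i)]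
    simp [mul_comm]
  have hnodes : ∀ i, (q ^ 2).eval (t i) = 0 := fun i => by
    simp [q, eval_prod, Finset.prod_eq_zero_iff, sub_eq_zero]
  have hpos := intervalIntegralₗ_sq_pos hab hq.ne_zero
  rw [h _ hdeg, Finset.sum_eq_zero fun i _ => by rw [hnodes i, mul_zero]] at hpos
  exact hpos.false

variable (a b) in
theorem sub_pow_eq_sum_iff_isExactQuadrature {s : ℕ} (m : ℕ) (α t : Fin s → ℝ) :
    (X + C b) ^ (m + 1) - (X + C a) ^ (m + 1) = ∑ i, C (α i) * (X + C (t i)) ^ m ↔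
      IsExactQuadrature a b t (fun i => α i / (m + 1)) m := by
  have hm : (m + 1 : ℝ) ≠ 0 := by positivity
  have hlhs : ∀ x, ((X + C b) ^ (m + 1) - (X + C a) ^ (m + 1)).eval x =
      (m + 1) * intervalIntegralₗ a b ((X + C x) ^ m) := fun x => by
    rw [intervalIntegralₗ_X_add_C_pow]
    simp [add_comm]
  have hrhs : ∀ x, (∑ i, C (α i) * (X + C (t i)) ^ m).eval x =
      (m + 1) * ∑ i, α i / (m + 1) * ((X + C x) ^ m).eval (t i) := fun x => by
    simp only [eval_finsetSum, eval_mul, eval_C, eval_pow, eval_add, eval_X, Finset.mul_sum]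
    refine Finset.sum_congr rfl fun i _ => ?_
    field_simp
    ring
  constructor
  · intro h p hp
    let Λ := intervalIntegralₗ a b - ∑ i, (α i / (m + 1)) • leval (t i)
    have hΛ : ∀ p, Λ p = intervalIntegralₗ a b p - ∑ i, α i / (m + 1) * p.eval (t i) := by
      simp [Λ]
    refine sub_eq_zero.1 ((hΛ p).symm.trans (linearMap_eq_zero_of_forall_X_add_C_pow Λ ?_ hp))
    intro x
    rw [hΛ, sub_eq_zero, ← mul_right_inj' hm, ← hlhs, ← hrhs, h]
  · intro h
    refine Polynomial.funext fun x => ?_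
    rw [hlhs, hrhs, h _ (by simp)]

end Polynomial

theorem stmt10_general (d : ℕ) :
    IsLeast {s : ℕ | ∃ (α : Fin s → ℝ) (a : Fin s → ℝ),
        ((X + 1) ^ (2 * d + 2) - X ^ (2 * d + 2) : Polynomial ℝ) =
          ∑ i : Fin s, C (α i) * (X + C (a i)) ^ (2 * d + 1)}
      (d + 1) := by
  have hdecomp := fun s (α t : Fin s → ℝ) =>
    sub_pow_eq_sum_iff_isExactQuadrature 0 1 (2 * d + 1) α t
  simp only [map_one, map_zero, add_zero] at hdecomp
  refine ⟨?_, fun s ⟨α, t, h⟩ => ?_⟩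
  · obtain ⟨t, w, hw⟩ := exists_isExactQuadrature zero_lt_one d
    refine ⟨fun i => (2 * d + 2) * w i, t, (hdecomp _ _ t).2 ?_⟩
    convert hw using 2 with i
    push_cast
    field_simp
    ring
  · by_contra! hs
    exact not_isExactQuadrature zero_lt_one _ _ (((hdecomp _ _ t).1 h).mono (by omega))

theorem stmt10 (d : ℕ) (hd : 1 ≤ d) :
    IsLeast {s : ℕ | ∃ (α : Fin s → ℝ) (a : Fin s → ℝ),
        ((X + 1) ^ (2 * d + 2) - X ^ (2 * d + 2) : Polynomial ℝ) =
          ∑ i : Fin s, C (α i) * (X + C (a i)) ^ (2 * d + 1)}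
      (d + 1) :=
  stmt10_general d
end

section
/- Let s ≤ d be positive integers. The number of non-increasing sequences (e_1, ..., e_s) of natural numbers with max e_i < d satisfying the Pólya condition equals C(s+d, s) · (d+1-s)/(d+1). -/
open Finset

def polyaT (s d : ℕ) : Finset (Fin s → Fin d) :=
  univ.filter (fun e => (∀ j k : Fin s, j ≤ k → (e k : ℕ) ≤ (e j : ℕ)) ∧
    ∀ j : Fin s, s ≤ (e j : ℕ) + (j : ℕ) + 1)

lemma mem_polyaT {s d : ℕ} {e : Fin s → Fin d} :
    e ∈ polyaT s d ↔ (∀ j k : Fin s, j ≤ k → (e k : ℕ) ≤ (e j : ℕ)) ∧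
      ∀ j : Fin s, s ≤ (e j : ℕ) + (j : ℕ) + 1 := by
  simp [polyaT]

lemma polyaT_zero (d : ℕ) : (polyaT 0 d).card = 1 := by
  have : polyaT 0 d = univ := by
    ext e
    simp only [mem_polyaT, Finset.mem_univ, iff_true]
    exact ⟨fun j => j.elim0, fun j => j.elim0⟩
  rw [this]
  simp

lemma polyaT_empty {s d : ℕ} (h : d < s) : polyaT s d = ∅ := by
  ext e
  simp only [mem_polyaT, Finset.notMem_empty, iff_false]
  rintro ⟨-, h2⟩
  have hs : 0 < s := by omega
  have h1 := h2 ⟨0, hs⟩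
  have h3 := (e ⟨0, hs⟩).isLt
  have h0 : ((⟨0, hs⟩ : Fin s) : ℕ) = 0 := rfl
  omega

lemma bijA (s d : ℕ) (hsd : s ≤ d) :
    (Finset.filter (fun e => ((e 0 : ℕ) = d)) (polyaT (s+1) (d+1))).card
      = (polyaT s (d+1)).card := by
  refine Finset.card_bij' (i := fun e _ => fun k : Fin s => e k.succ)
    (j := fun f _ => (Fin.cons (⟨d, Nat.lt_succ_self d⟩ : Fin (d+1)) f : Fin (s+1) → Fin (d+1))) ?hi ?hj ?left ?right
  case hi =>
    intro e he
    simp only [Finset.mem_filter] at he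
    obtain ⟨he, he0⟩ := he
    rw [mem_polyaT] at he ⊢
    beta_reduce
    constructor
    · intro j k h
      exact he.1 j.succ k.succ (Fin.succ_le_succ_iff.mpr h)
    intro j
    have := he.2 j.succ
    simp only [Fin.val_succ] at this
    omega
  case hj =>
    intro f hf
    rw [mem_polyaT] at hf
    simp only [Finset.mem_filter]
    refine ⟨?_, by simp⟩
    rw [mem_polyaT]
    constructor
    · intro j k hjk
      induction j using Fin.cases with
      | zero =>
        simp only [Fin.cons_zero]
        exact Nat.lt_succ_iff.mp ((Fin.cons (⟨d, Nat.lt_succ_self d⟩ : Fin (d+1)) f : Fin (s+1) → Fin (d+1)) k).isLt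
      | succ j =>
        induction k using Fin.cases with
        | zero => exact absurd hjk (by simp [Fin.le_def])
        | succ k =>
          simp only [Fin.cons_succ]
          exact hf.1 j k (by simpa [Fin.succ_le_succ_iff] using hjk)
    · intro j
      induction j using Fin.cases with
      | zero => simp; omega
      | succ j =>
        have := hf.2 j
        simp only [Fin.cons_succ, Fin.val_succ]
        omega
  case left =>
    intro e he
    simp only [Finset.mem_filter] at he
    have h0 : e 0 = ⟨d, Nat.lt_succ_self d⟩ := Fin.ext he.2
    funext j
    induction j using Fin.cases with
    | zero => simp [Fin.cons_zero, h0]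
    | succ j => simp [Fin.cons_succ]
  case right =>
    intro f hf
    funext k
    simp [Fin.cons_succ]

lemma bijB (s d : ℕ) :
    (Finset.filter (fun e => ¬((e 0 : ℕ) = d)) (polyaT (s+1) (d+1))).card
      = (polyaT (s+1) d).card := by
  refine Finset.card_bij'
    (i := fun e he => fun j : Fin (s+1) => (⟨(e j : ℕ), by
      simp only [Finset.mem_filter, mem_polyaT] at he
      have h1 : (e j : ℕ) ≤ (e 0 : ℕ) := he.1.1 0 j (Fin.zero_le j)
      have h2 := (e 0).isLt
      have h3 := he.2
      omega⟩ : Fin d))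
    (j := fun f _ => fun j : Fin (s+1) => (⟨(f j : ℕ),
      Nat.lt_succ_of_lt (f j).isLt⟩ : Fin (d+1))) ?hi ?hj ?left ?right
  case hi =>
    intro e he
    simp only [Finset.mem_filter, mem_polyaT] at he ⊢
    exact ⟨fun j k h => he.1.1 j k h, fun j => he.1.2 j⟩
  case hj =>
    intro f hf
    rw [mem_polyaT] at hf
    simp only [Finset.mem_filter, mem_polyaT]
    refine ⟨⟨fun j k h => hf.1 j k h, fun j => hf.2 j⟩, ?_⟩
    intro hc
    have hc' : (f 0 : ℕ) = d := hc
    have := (f 0).isLt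
    omega
  case left => intro e he; funext j; rfl
  case right => intro f hf; funext j; rfl

lemma polyaT_rec (s d : ℕ) (hsd : s ≤ d) :
    (polyaT (s+1) (d+1)).card = (polyaT s (d+1)).card + (polyaT (s+1) d).card := by
  classical
  rw [← Finset.card_filter_add_card_filter_not
    (s := polyaT (s+1) (d+1)) (p := fun e => ((e 0 : ℕ) = d)),
    bijA s d hsd, bijB s d]

lemma polyaT_count : ∀ n s d : ℕ, s + d = n → s ≤ d →
    ((polyaT s d).card : ℚ) * ((d : ℚ) + 1) =
      ((s + d).choose s : ℚ) * ((d : ℚ) + 1 - (s : ℚ)) := by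
  intro n
  induction n using Nat.strong_induction_on with
  | _ n ih =>
    intro s d hn hsd
    match s, hsd with
    | 0, _ =>
      rw [polyaT_zero]
      simp
    | (s+1), hsd =>
      match d, hsd with
      | (d+1), hsd =>
        have hsd' : s ≤ d := by omega
        rw [polyaT_rec s d hsd']
        have hB := ih (s + (d+1)) (by omega) s (d+1) rfl (by omega)
        have hA : ((polyaT (s+1) d).card : ℚ) * ((d : ℚ) + 1)
            = (((s+1) + d).choose (s+1) : ℚ) * ((d : ℚ) - s) := by
          rcases eq_or_lt_of_le hsd' with heq | hlt
          · rw [polyaT_empty (by omega)]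
            rw [heq]
            simp
          · have h := ih ((s+1) + d) (by omega) (s+1) d rfl (by omega)
            push_cast at h ⊢
            linear_combination h
        have hr : (((s + d + 1).choose (s+1)) : ℚ) * ((s : ℚ)+1)
            = (((s + d + 1).choose s) : ℚ) * ((d : ℚ)+1) := by
          have h := Nat.choose_succ_right_eq (s+d+1) s
          have h2 : s + d + 1 - s = d + 1 := by omega
          rw [h2] at h
          exact_mod_cast congrArg (fun x : ℕ => (x : ℚ)) h
        have hp : (((s+1) + (d+1)).choose (s+1) : ℚ)
            = ((s + d + 1).choose s : ℚ) + ((s + d + 1).choose (s+1) : ℚ) := by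
          have h3 : (s+1)+(d+1) = (s+d+1)+1 := by omega
          rw [h3, Nat.choose_succ_succ]
          push_cast
          ring
        have e1 : (s+1) + d = s + d + 1 := by omega
        rw [e1] at hA
        have e2 : s + (d+1) = s + d + 1 := by omega
        rw [e2] at hB
        have hd1 : ((d : ℚ) + 1) ≠ 0 := by positivity
        push_cast
        rw [hp]
        have key : (((polyaT s (d+1)).card : ℚ) + ((polyaT (s+1) d).card : ℚ))
              * ((d : ℚ) + 1 + 1) * ((d : ℚ) + 1)
            = (((s + d + 1).choose s : ℚ) + ((s + d + 1).choose (s+1) : ℚ))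
              * ((d : ℚ) + 1 + 1 - ((s : ℚ) + 1)) * ((d : ℚ) + 1) := by
          push_cast at hB
          linear_combination ((d : ℚ) + 2) * hA + ((d : ℚ) + 1) * hB - hr
        have := mul_right_cancel₀ hd1 key
        linear_combination this

lemma polyaT_card (s d : ℕ) (hsd : s ≤ d) :
    (polyaT s d).card = (s + d).choose s * (d + 1 - s) / (d + 1) := by
  have h := polyaT_count (s + d) s d rfl hsd
  have hq : (((polyaT s d).card * (d + 1) : ℕ) : ℚ)
      = (((s + d).choose s * (d + 1 - s) : ℕ) : ℚ) := by
    push_cast [Nat.cast_sub (by omega : s ≤ d + 1)]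
    linear_combination h
  have hnat : (polyaT s d).card * (d + 1) = (s + d).choose s * (d + 1 - s) :=
    Nat.cast_injective hq
  rw [← hnat, Nat.mul_div_cancel _ (by omega : 0 < d + 1)]

lemma stair_of_polya {s : ℕ} {e : Fin s → ℕ} (hanti : Antitone e)
    (hp : ∀ i : ℕ, (Finset.univ.filter (fun j => e j < i)).card ≤ i) (j : Fin s) :
    s ≤ e j + (j : ℕ) + 1 := by
  by_contra hcon
  push_neg at hcon
  set i := s - 1 - (j : ℕ) with hi
  have hsub : Finset.Ici j ⊆ Finset.univ.filter (fun k => e k < i) := by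
    intro k hk
    simp only [Finset.mem_Ici] at hk
    simp only [Finset.mem_filter, Finset.mem_univ, true_and]
    have h1 : e k ≤ e j := hanti hk
    omega
  have h2 := Finset.card_le_card hsub
  rw [Fin.card_Ici] at h2
  have h3 := hp i
  have h4 := j.isLt
  omega

lemma polya_of_stair {s : ℕ} {e : Fin s → ℕ}
    (hst : ∀ j : Fin s, s ≤ e j + (j : ℕ) + 1) (i : ℕ) :
    (Finset.univ.filter (fun j => e j < i)).card ≤ i := by
  rcases le_or_gt s i with h | h
  · calc (Finset.univ.filter (fun j => e j < i)).card
        ≤ (Finset.univ : Finset (Fin s)).card := Finset.card_filter_le _ _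
      _ = s := by simp
      _ ≤ i := h
  · rcases Nat.eq_zero_or_pos i with rfl | hi
    · simp
    · have hlt : s - i < s := by omega
      have hsub : Finset.univ.filter (fun j => e j < i) ⊆ Finset.Ici (⟨s - i, hlt⟩ : Fin s) := by
        intro k hk
        simp only [Finset.mem_filter, Finset.mem_univ, true_and] at hk
        rw [Finset.mem_Ici, Fin.le_def]
        have := hst k
        simp only [Fin.val_mk]
        omega
      have h2 := Finset.card_le_card hsub
      rw [Fin.card_Ici] at h2
      simp only [Fin.val_mk] at h2
      omega

theorem stmt12 (s d : ℕ) (hs : 0 < s) (hsd : s ≤ d) :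
    {e : Fin s → ℕ | Antitone e ∧ (∀ i, e i < d) ∧
        ∀ i : ℕ, (Finset.univ.filter (fun j => e j < i)).card ≤ i}.ncard =
      (s + d).choose s * (d + 1 - s) / (d + 1) := by
  classical
  have hinj : Function.Injective (fun (e : Fin s → Fin d) => fun j => ((e j : ℕ))) :=
    fun a b h => funext fun j => Fin.ext (congrFun h j)
  have hset : {e : Fin s → ℕ | Antitone e ∧ (∀ i, e i < d) ∧
        ∀ i : ℕ, (Finset.univ.filter (fun j => e j < i)).card ≤ i}
      = ↑((polyaT s d).image (fun e => fun j => ((e j : ℕ)))) := by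
    ext e
    simp only [Set.mem_setOf_eq, Finset.coe_image, Set.mem_image, Finset.mem_coe, mem_polyaT]
    constructor
    · rintro ⟨hanti, hlt, hpol⟩
      exact ⟨fun j => ⟨e j, hlt j⟩, ⟨fun j k h => hanti h,
        fun j => stair_of_polya hanti hpol j⟩, rfl⟩
    · rintro ⟨f, ⟨hmono, hstair⟩, rfl⟩
      exact ⟨fun a b hab => hmono a b hab, fun j => (f j).isLt,
        fun i => polya_of_stair hstair i⟩
  rw [hset, Set.ncard_coe_finset, Finset.card_image_of_injective _ hinj,
    polyaT_card s d hsd]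
end

section
/- Let K be a field of characteristic 0 and F = {(x - a_i)^{e_i} : 1 ≤ i ≤ s} a family of pairwise distinct shifted powers whose span does not contain the constant polynomial 1. Then for any natural number e, the number of distinct b ∈ K such that (x - b)^e lies in the span of F is at most 2s - 1. -/
/-!
The span `V` of the `s` shifted powers has dimension at most `s`. For distinct `b₀, …, bₘ` with
`m ≤ d`, the powers `(X - bⱼ) ^ d` are linearly independent: their coefficients form a Vandermonde
system. Hence `d + 1` of them would span all polynomials of degree `≤ d`, including `1`; as
`1 ∉ V`, the space `V ∩ K[X]_(d+1)` has dimension `≤ d`, and so it contains at most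
`dim V ≤ s ≤ 2s - 1` of the powers `(X - b) ^ d`.
-/

open Polynomial

namespace Polynomial

variable {K : Type*} [Field K]

theorem linearIndependent_X_sub_C_pow_fin [CharZero K] {n d : ℕ} (hn : n ≤ d + 1)
    {b : Fin n → K} (hb : Function.Injective b) :
    LinearIndependent K fun j => (X - C (b j)) ^ d := by
  rw [Fintype.linearIndependent_iff]
  intro g hg
  -- The coefficient of `X ^ (d - i)` in `(X - C β) ^ d` is `(d.choose i) * (-β) ^ i`.
  have hpow : ∀ i : Fin n, ∑ j, g j * (-b j) ^ (i : ℕ) = 0 := by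
    intro i
    have hi : (i : ℕ) ≤ d := by omega
    have hchoose : (d.choose (d - i) : K) ≠ 0 :=
      Nat.cast_ne_zero.mpr (Nat.choose_pos (Nat.sub_le d i)).ne'
    have hcoeff := congrArg (coeff · (d - i)) hg
    simp only [finsetSum_coeff, coeff_smul, sub_eq_add_neg, ← C_neg, coeff_X_add_C_pow,
      Nat.sub_sub_self hi, smul_eq_mul, coeff_zero, ← mul_assoc, ← Finset.sum_mul] at hcoeff
    exact (mul_eq_zero.mp hcoeff).resolve_right hchoose
  exact congrFun (Matrix.eq_zero_of_forall_pow_sum_mul_pow_eq_zero (neg_injective.comp hb) hpow)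

theorem linearIndependent_X_sub_C_pow_s14 [CharZero K] {ι : Type*} [Fintype ι] {d : ℕ}
    (hι : Fintype.card ι ≤ d + 1) {b : ι → K} (hb : Function.Injective b) :
    LinearIndependent K fun j => (X - C (b j)) ^ d := by
  let e := Fintype.equivFin ι
  exact (linearIndependent_equiv e.symm).mp
    (linearIndependent_X_sub_C_pow_fin hι (hb.comp e.symm.injective))

theorem finrank_inf_degreeLT_le_of_one_notMem {V : Submodule K K[X]} (hV : (1 : K[X]) ∉ V)
    (d : ℕ) : Module.finrank K ↥(V ⊓ degreeLT K (d + 1)) ≤ d := by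
  have hlt : V ⊓ degreeLT K (d + 1) < degreeLT K (d + 1) := by
    refine lt_of_le_of_ne inf_le_right fun h => hV ?_
    have h1 : (1 : K[X]) ∈ degreeLT K (d + 1) := by
      rw [mem_degreeLT, degree_one]
      exact_mod_cast d.succ_pos
    exact (h.ge h1).1
  have := Submodule.finrank_lt_finrank_of_lt hlt
  rwa [(degreeLTEquiv K (d + 1)).finrank_eq, Module.finrank_fin_fun, Nat.lt_succ_iff] at this

theorem card_le_finrank_of_X_sub_C_pow_mem [CharZero K] {V : Submodule K K[X]}
    [FiniteDimensional K V] (hV : (1 : K[X]) ∉ V) {d : ℕ} {T : Finset K}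
    (hT : ∀ b ∈ T, (X - C b) ^ d ∈ V) : T.card ≤ Module.finrank K V := by
  obtain ⟨T', hT'T, hT'⟩ := Finset.exists_subset_card_eq (min_le_left T.card (d + 1))
  have hli : LinearIndependent K fun t : T' => (X - C (t : K)) ^ d :=
    linearIndependent_X_sub_C_pow_s14 (by simp [hT']) Subtype.val_injective
  have hspan : Submodule.span K (Set.range fun t : T' => (X - C (t : K)) ^ d) ≤ V ⊓ degreeLT K (d + 1) := by
    refine Submodule.span_le.mpr ?_
    rintro _ ⟨t, rfl⟩
    refine ⟨hT _ (hT'T t.2), ?_⟩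
    rw [SetLike.mem_coe, mem_degreeLT, degree_pow, degree_X_sub_C, nsmul_one]
    exact_mod_cast d.lt_succ_self
  have hmin : min T.card (d + 1) ≤ Module.finrank K ↥(V ⊓ degreeLT K (d + 1)) := by
    rw [← hT', ← Fintype.card_coe, ← finrank_span_eq_card hli]
    exact Submodule.finrank_mono hspan
  have hUd := finrank_inf_degreeLT_le_of_one_notMem hV d
  have hUV : Module.finrank K ↥(V ⊓ degreeLT K (d + 1)) ≤ Module.finrank K V := Submodule.finrank_mono inf_le_left
  omega

theorem ncard_setOf_X_sub_C_pow_mem_le [CharZero K] {V : Submodule K K[X]}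
    [FiniteDimensional K V] (hV : (1 : K[X]) ∉ V) (d : ℕ) :
    {b : K | (X - C b) ^ d ∈ V}.ncard ≤ Module.finrank K V := by
  rcases Set.finite_or_infinite {b : K | (X - C b) ^ d ∈ V} with hfin | hinf
  · rw [Set.ncard_eq_toFinset_card _ hfin]
    exact card_le_finrank_of_X_sub_C_pow_mem hV fun b hb => (hfin.mem_toFinset.mp hb)
  · simp [hinf.ncard]

end Polynomial

theorem stmt14_general (K : Type*) [Field K] [CharZero K] (s : ℕ)
    (a : Fin s → K) (e : Fin s → ℕ)
    (hone : (1 : Polynomial K) ∉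
      Submodule.span K (Set.range fun i => (X - C (a i)) ^ (e i))) :
    ∀ d : ℕ,
      {b : K | (X - C b) ^ d ∈
        Submodule.span K (Set.range fun i => (X - C (a i)) ^ (e i))}.ncard ≤
      2 * s - 1 := by
  intro d
  have : FiniteDimensional K (Submodule.span K (Set.range fun i => (X - C (a i)) ^ (e i))) :=
    FiniteDimensional.span_of_finite K (Set.finite_range _)
  have hrank := finrank_range_le_card (R := K) fun i => (X - C (a i)) ^ (e i)
  rw [Fintype.card_fin, Set.finrank] at hrank
  have := ncard_setOf_X_sub_C_pow_mem_le hone d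
  omega

theorem stmt14 (K : Type*) [Field K] [CharZero K] (s : ℕ)
    (a : Fin s → K) (e : Fin s → ℕ)
    (hdist : Function.Injective (fun i => (a i, e i)))
    (hone : (1 : Polynomial K) ∉
      Submodule.span K (Set.range fun i => (X - C (a i)) ^ (e i))) :
    ∀ d : ℕ,
      {b : K | (X - C b) ^ d ∈
        Submodule.span K (Set.range fun i => (X - C (a i)) ^ (e i))}.ncard ≤
      2 * s - 1 :=
  stmt14_general K s a e hone
end

section
/- Let K be a field of characteristic 0, let (e_1, ..., e_s) be a non-increasing sequence of natural numbers satisfying the Pólya condition, and let S be a finite subset of K. If a_1, ..., a_s are chosen independently and uniformly at random from S, then the probability that the polynomials (x-a_1)^{e_1}, ..., (x-a_s)^{e_s} are linearly independent over K is at least 1 - s(s-1)/|S|. -/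
/-!
Fix `t₀ ∉ S`. Up to the nonzero factor `(t₀ - a) ^ (e - m)`, `m = min e (s - 1)`, the first
`s` Taylor coefficients of `(X - a) ^ e` at `t₀` are the values at `a` of `s` polynomials of
degree `≤ s - 1` spanning a space of dimension `m + 1`, and independence of these coefficient
vectors implies independence of the polynomials. Choose `a_{s-1}, …, a_0` in turn: `a_i` is bad
only if its vector lies in the span `W` of the at most `s - 1 - i` vectors chosen before. The
Pólya condition gives `m_i ≥ s - 1 - i`, so some functional vanishing on `W` is nonzero on the
polynomial family, and the bad `a_i` are roots of a nonzero polynomial of degree `≤ s - 1`.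
Hence at least `(|S| - (s - 1)) ^ s` tuples are good, and Bernoulli's inequality concludes.
-/

open Polynomial
open scoped Classical

open Finset Module Submodule

theorem pow_card_sub_le_card_filter_linearIndependent {K V α : Type*} [DivisionRing K]
    [AddCommGroup V] [Module K V] (S : Finset α) (D : ℕ) {t : ℕ} (f : Fin t → α → V)
    (hf : ∀ (i : Fin t) (W : Finset V), #W + i + 1 ≤ t →
      #{x ∈ S | f i x ∈ span K (W : Set V)} ≤ D) :
    (#S - D) ^ t ≤
      #{a ∈ Fintype.piFinset fun _ => S | LinearIndependent K fun i => f i (a i)} := by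
  induction t with
  | zero => simp
  | succ t ih =>
    set G :=
      {a ∈ Fintype.piFinset fun _ : Fin t => S | LinearIndependent K fun i => f i.succ (a i)}
    let fresh (a : Fin t → α) : Finset α :=
      {x ∈ S | f 0 x ∉ span K (Set.range fun i => f i.succ (a i))}
    have hG : (#S - D) ^ t ≤ #G := ih _ fun i W hW => hf i.succ W (by simp; omega)
    have hfresh (a : Fin t → α) : #S - D ≤ #(fresh a) := by
      have hspan := hf 0 (univ.image fun i => f i.succ (a i))
        (by simpa using card_image_le (s := univ) (f := fun i => f i.succ (a i)))
      rw [coe_image, coe_univ, Set.image_univ] at hspan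
      simp only [fresh]
      rw [filter_not, card_sdiff_of_subset (filter_subset _ _)]
      exact Nat.sub_le_sub_left hspan _
    -- prepend to each good tail an entry whose vector avoids the span of the tail
    calc (#S - D) ^ (t + 1) ≤ ∑ _a ∈ G, (#S - D) := by
          rw [sum_const, smul_eq_mul, pow_succ]; gcongr
      _ ≤ ∑ a ∈ G, #(fresh a) := sum_le_sum fun a _ => hfresh a
      _ = #(G.sigma fresh) := (card_sigma _ _).symm
      _ ≤ _ := by
        refine card_le_card_of_injOn (fun p => Fin.cons p.2 p.1) ?_ ?_
        · rintro ⟨a, x⟩ hax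
          simp only [coe_sigma, Set.mem_sigma_iff, mem_coe, G, fresh, mem_filter,
            Fintype.mem_piFinset] at hax
          obtain ⟨⟨ha, hli⟩, hx, hfree⟩ := hax
          have hcons : (fun i => f i ((Fin.cons x a : Fin (t + 1) → α) i)) =
              Fin.cons (f 0 x) fun i => f i.succ (a i) := by
            ext i; cases i using Fin.cases <;> simp
          simp only [coe_filter, Set.mem_ofPred_eq, Fintype.mem_piFinset, Fin.forall_fin_succ,
            Fin.cons_zero, Fin.cons_succ, hcons, linearIndependent_finCons]
          exact ⟨⟨hx, ha⟩, hli, hfree⟩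
        · rintro ⟨a, x⟩ - ⟨b, y⟩ - h
          obtain ⟨rfl, rfl⟩ := Fin.cons_injective2 h
          rfl

theorem exists_dotProduct_eq_zero_and_linearCombination_ne_zero {K ι M : Type*} [Field K]
    [Fintype ι] [AddCommGroup M] [Module K M] (P : ι → M) (U : Submodule K (ι → K))
    (hU : finrank K U < finrank K (span K (Set.range P))) :
    ∃ c : ι → K, (∀ u ∈ U, c ⬝ᵥ u = 0) ∧ Fintype.linearCombination K P c ≠ 0 := by
  set A := (dotProductBilin K K).compl₂ U.subtype
  set Φ := Fintype.linearCombination K P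
  have hker : ¬ LinearMap.ker A ≤ LinearMap.ker Φ := by
    intro hle
    have hA := LinearMap.finrank_range_add_finrank_ker A
    have hΦ := LinearMap.finrank_range_add_finrank_ker Φ
    have hrange : finrank K (LinearMap.range A) ≤ finrank K U :=
      (Submodule.finrank_le _).trans Subspace.dual_finrank_eq.le
    rw [Fintype.range_linearCombination] at hΦ
    have := Submodule.finrank_mono hle
    omega
  obtain ⟨c, hcA, hcΦ⟩ := SetLike.not_le_iff_exists.1 hker
  exact ⟨c, fun u hu => LinearMap.congr_fun hcA ⟨u, hu⟩, hcΦ⟩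

theorem card_filter_eval_mem_le {K ι : Type*} [Field K] [Fintype ι] (P : ι → K[X]) {d : ℕ}
    (hP : ∀ k, (P k).natDegree ≤ d) (U : Submodule K (ι → K))
    (hU : finrank K U < finrank K (span K (Set.range P))) (S : Finset K) :
    #{x ∈ S | (fun k => (P k).eval x) ∈ U} ≤ d := by
  obtain ⟨c, hcU, hc⟩ := exists_dotProduct_eq_zero_and_linearCombination_ne_zero P U hU
  set q := Fintype.linearCombination K P c
  have hq (x : K) : q.eval x = c ⬝ᵥ fun k => (P k).eval x := by
    simp [q, Fintype.linearCombination_apply, eval_finsetSum, dotProduct]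
  calc #{x ∈ S | (fun k => (P k).eval x) ∈ U} ≤ q.natDegree := by
        refine card_le_degree_of_subset_roots fun x hx => ?_
        obtain ⟨-, hxU⟩ := mem_filter.1 hx
        rw [mem_roots hc, IsRoot, hq, hcU _ hxU]
    _ ≤ d := (natDegree_sum_le_of_forall_le _ _ fun k _ => (natDegree_smul_le _ _).trans (hP k))

section Taylor

variable {K : Type*} [Field K]

noncomputable def taylorCoeffs (t₀ : K) (n : ℕ) : K[X] →ₗ[K] Fin n → K :=
  LinearMap.pi fun k => lcoeff K k ∘ₗ taylor t₀

-- For `k > min e (n - 1)` the truncated exponent is harmless: then `k > e` and `e.choose k = 0`.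
noncomputable def taylorCoeffPoly (t₀ : K) (n e : ℕ) (k : Fin n) : K[X] :=
  C (e.choose k : K) * (C t₀ - X) ^ (min e (n - 1) - k)

theorem natDegree_taylorCoeffPoly_le (t₀ : K) (n e : ℕ) (k : Fin n) :
    (taylorCoeffPoly t₀ n e k).natDegree ≤ n - 1 := by
  unfold taylorCoeffPoly
  calc _ ≤ (min e (n - 1) - k) * 1 :=
        (natDegree_C_mul_le _ _).trans (natDegree_pow_le_of_le _ (by compute_degree))
    _ ≤ n - 1 := by omega

theorem taylorCoeffs_X_sub_C_pow (t₀ a : K) (n e : ℕ) :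
    taylorCoeffs t₀ n ((X - C a) ^ e) =
      (t₀ - a) ^ (e - min e (n - 1)) • fun k => (taylorCoeffPoly t₀ n e k).eval a := by
  ext k
  have hX : X + C t₀ - C a = X + C (t₀ - a) := by rw [C_sub]; ring
  simp only [taylorCoeffs, taylorCoeffPoly, LinearMap.pi_apply, LinearMap.comp_apply, lcoeff_apply,
    Pi.smul_apply, eval_mul, eval_C, eval_pow, eval_sub, eval_X, smul_eq_mul]
  rw [taylor_pow, map_sub, taylor_X, taylor_C, hX, coeff_X_add_C_pow]
  rcases le_or_gt (k : ℕ) (min e (n - 1)) with hk | hk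
  · rw [mul_left_comm, ← pow_add, mul_comm]
    congr 2
    omega
  · rw [Nat.choose_eq_zero_of_lt (by omega)]
    simp

theorem le_finrank_span_range_taylorCoeffPoly [CharZero K] (t₀ : K) {n : ℕ} (hn : 0 < n)
    (e : ℕ) :
    min e (n - 1) + 1 ≤ finrank K (span K (Set.range (taylorCoeffPoly t₀ n e))) := by
  set m := min e (n - 1)
  let powers : Polynomial.Sequence K := ⟨fun j => (C t₀ - X) ^ j, fun j => by
    rw [← neg_sub, degree_pow, degree_neg, degree_X_sub_C, nsmul_one]⟩
  have hm : m + 1 ≤ n := by omega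
  have hchoose (j : Fin (m + 1)) : (e.choose j : K) ≠ 0 :=
    Nat.cast_ne_zero.2 (Nat.choose_pos (by omega)).ne'
  have hfamily : taylorCoeffPoly t₀ n e ∘ Fin.castLE hm =
      (fun j => Units.mk0 _ (hchoose j)) • (powers ∘ fun j : Fin (m + 1) => m - j) := by
    ext j : 1
    simp [taylorCoeffPoly, smul_eq_C_mul, powers, m]
  have hli : LinearIndependent K (taylorCoeffPoly t₀ n e ∘ Fin.castLE hm) := by
    rw [hfamily]
    exact (powers.linearIndependent.comp _ fun i j h => Fin.ext (by omega)).units_smul _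
  have := FiniteDimensional.span_of_finite K (Set.finite_range (taylorCoeffPoly t₀ n e))
  calc m + 1 = Set.finrank K (Set.range _) := by
        simpa using linearIndependent_iff_card_eq_finrank_span.1 hli
    _ ≤ _ := Submodule.finrank_mono (span_mono (Set.range_comp_subset_range _ _))

theorem linearIndependent_X_sub_C_pow_of_taylorCoeffPoly {ι : Type*} (t₀ : K) (n : ℕ)
    (e : ι → ℕ) (a : ι → K) (ha : ∀ i, a i ≠ t₀)
    (h : LinearIndependent K fun i k => (taylorCoeffPoly t₀ n (e i) k).eval (a i)) :
    LinearIndependent K fun i => (X - C (a i)) ^ e i := by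
  refine LinearIndependent.of_comp (taylorCoeffs t₀ n) ?_
  have hunit (i : ι) : (t₀ - a i) ^ (e i - min (e i) (n - 1)) ≠ 0 :=
    pow_ne_zero _ (sub_ne_zero.2 (ha i).symm)
  convert h.units_smul fun i => Units.mk0 _ (hunit i)
  ext i : 1
  simp [taylorCoeffs_X_sub_C_pow]

end Taylor

theorem le_add_of_antitone_of_polya {s : ℕ} {e : Fin s → ℕ} (hanti : Antitone e)
    (hpolya : ∀ i : ℕ, #{j | e j < i} ≤ i) (i : Fin s) : s ≤ e i + i + 1 := by
  have hsub : ({j | i ≤ j} : Finset (Fin s)) ⊆ ({j | e j < e i + 1} : Finset (Fin s)) := by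
    intro j
    simpa using fun hij => Nat.lt_succ_of_le (hanti hij)
  have hcard : #({j | i ≤ j} : Finset (Fin s)) = s - i := by
    rw [filter_le_eq_Ici, Fin.card_Ici]
  have := (card_le_card hsub).trans (hpolya (e i + 1))
  omega

theorem one_sub_mul_div_le_div_pow {N D G : ℕ} (s : ℕ) (hN : 0 < N) (hG : (N - D) ^ s ≤ G) :
    1 - s * (D : ℝ) / N ≤ G / N ^ s := by
  have hN' : (0 : ℝ) < N := by exact_mod_cast hN
  set x : ℝ := ((N - D : ℕ) : ℝ) / N
  have hsub : (N : ℝ) - D ≤ ((N - D : ℕ) : ℝ) := by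
    rcases le_total D N with h | h
    · rw [Nat.cast_sub h]
    · rw [Nat.sub_eq_zero_of_le h, Nat.cast_zero, sub_nonpos]
      exact_mod_cast h
  have hx : 1 - (D : ℝ) / N ≤ x := by
    rw [one_sub_div hN'.ne']
    exact div_le_div_of_nonneg_right hsub hN'.le
  calc 1 - s * (D : ℝ) / N ≤ 1 + s * (x - 1) := by
        rw [mul_div_assoc]; nlinarith [(s.cast_nonneg : (0 : ℝ) ≤ s)]
    _ ≤ (1 + (x - 1)) ^ s := one_add_mul_le_pow (by linarith [show 0 ≤ x by positivity]) s
    _ = ((N - D) ^ s : ℕ) / N ^ s := by simp [x, div_pow]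
    _ ≤ G / N ^ s := by gcongr

theorem stmt15 (K : Type*) [Field K] [CharZero K] (s : ℕ)
    (e : Fin s → ℕ) (hanti : Antitone e)
    (hpolya : ∀ i : ℕ, (Finset.univ.filter (fun j => e j < i)).card ≤ i)
    (S : Finset K) (hS : S.Nonempty) :
    (1 - (s * (s - 1) : ℝ) / S.card) ≤
      ((Fintype.piFinset (fun _ : Fin s => S)).filter
          (fun a => LinearIndependent K
            (fun i : Fin s => (X - C (a i)) ^ (e i)))).card /
        ((Fintype.piFinset (fun _ : Fin s => S)).card : ℝ) := by
  obtain ⟨t₀, ht₀⟩ := Infinite.exists_notMem_finset S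
  have hfew (i : Fin s) (W : Finset (Fin s → K)) (hW : #W + i + 1 ≤ s) :
      #{x ∈ S | (fun k => (taylorCoeffPoly t₀ s (e i) k).eval x) ∈
        span K (W : Set (Fin s → K))} ≤ s - 1 := by
    refine card_filter_eval_mem_le _ (natDegree_taylorCoeffPoly_le t₀ s (e i)) _ ?_ S
    have := le_finrank_span_range_taylorCoeffPoly t₀ i.pos (e i)
    have : finrank K (span K (W : Set (Fin s → K))) ≤ #W := finrank_span_finset_le_card W
    have := le_add_of_antitone_of_polya hanti hpolya i
    omega
  have hgood : (#S - (s - 1)) ^ s ≤ #{a ∈ Fintype.piFinset (fun _ : Fin s => S) |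
      LinearIndependent K fun i => (X - C (a i)) ^ e i} :=
    (pow_card_sub_le_card_filter_linearIndependent S (s - 1) _ hfew).trans <|
    card_le_card fun a ha => by
      simp only [mem_filter, Fintype.mem_piFinset] at ha ⊢
      exact ⟨ha.1, linearIndependent_X_sub_C_pow_of_taylorCoeffPoly t₀ s e a
        (fun i h => ht₀ (h ▸ ha.1 i)) ha.2⟩
  have hcast : (s * (s - 1) : ℝ) = s * ((s - 1 : ℕ) : ℝ) := by cases s <;> simp
  rw [hcast, Fintype.card_piFinset, prod_const, card_univ, Fintype.card_fin, Nat.cast_pow]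
  exact one_sub_mul_div_le_div_pow s hS.card_pos hgood
end

section
/- Let K be a field of characteristic 0 and F = {(x - a_i)^{e_i} : 1 ≤ i ≤ s} a family of pairwise distinct shifted powers whose exponent sequence satisfies the Pólya condition. Then the dimension of the K-linear span of F is at least √s. -/
open Polynomial

/-- Nonzero polynomials with pairwise distinct natDegrees are linearly independent. -/
lemma aux_li_of_natDegree {K : Type*} [Field K] {ι : Type*} [Fintype ι]
    (p : ι → K[X]) (hne : ∀ i, p i ≠ 0)
    (hinj : Function.Injective fun i => (p i).natDegree) :
    LinearIndependent K p := by
  classical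
  rw [Fintype.linearIndependent_iff]
  intro g hg
  by_contra hcon
  push_neg at hcon
  obtain ⟨i₀, hi₀⟩ := hcon
  set T : Finset ι := Finset.univ.filter (fun i => g i ≠ 0) with hT
  have hTne : T.Nonempty := ⟨i₀, by simp [hT, hi₀]⟩
  obtain ⟨j, hjT, hjmax⟩ := T.exists_max_image (fun i => (p i).natDegree) hTne
  have hgj : g j ≠ 0 := (Finset.mem_filter.mp hjT).2
  have hcoeff : (∑ i, g i • p i).coeff ((p j).natDegree) = g j * (p j).leadingCoeff := by
    rw [Polynomial.finset_sum_coeff]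
    rw [Finset.sum_eq_single j]
    · rw [Polynomial.coeff_smul, smul_eq_mul]; rfl
    · intro i _ hij
      by_cases hgi : g i = 0
      · simp [hgi]
      · have hiT : i ∈ T := by simp [hT, hgi]
        have hle := hjmax i hiT
        have hne' : (p i).natDegree ≠ (p j).natDegree := fun h => hij (hinj h)
        have : (p i).natDegree < (p j).natDegree := lt_of_le_of_ne hle hne'
        simp [Polynomial.coeff_eq_zero_of_natDegree_lt this]
    · intro h; exact absurd (Finset.mem_univ j) h
  rw [hg] at hcoeff
  simp only [Polynomial.coeff_zero] at hcoeff
  exact hgj (by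
    have := (mul_eq_zero.mp hcoeff.symm).resolve_right
      (Polynomial.leadingCoeff_ne_zero.mpr (hne j))
    exact this)

/-- Shifted powers with the same exponent and few enough distinct shifts are
linearly independent. -/
lemma aux_li_same_exp {K : Type*} [Field K] [CharZero K] {m v : ℕ}
    (b : Fin m → K) (hb : Function.Injective b) (hm : m ≤ v + 1) :
    LinearIndependent K fun j : Fin m => (X - C (b j)) ^ v := by
  rw [Fintype.linearIndependent_iff]
  intro g hg
  have key : ∀ t : Fin m, ∑ j, g j * (-(b j)) ^ (t : ℕ) = 0 := by
    intro t
    have ht : (t : ℕ) ≤ v := Nat.lt_succ_iff.mp (lt_of_lt_of_le t.2 hm)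
    have hcoeff := congrArg (fun q : K[X] => q.coeff (v - (t : ℕ))) hg
    simp only [Polynomial.finset_sum_coeff, Polynomial.coeff_smul, Polynomial.coeff_zero,
      smul_eq_mul] at hcoeff
    have hrw : ∀ j, ((X - C (b j)) ^ v).coeff (v - (t : ℕ))
        = (-(b j)) ^ (t : ℕ) * (v.choose (v - (t : ℕ)) : K) := by
      intro j
      rw [show (X - C (b j)) = X + C (-(b j)) by rw [map_neg, sub_eq_add_neg],
        Polynomial.coeff_X_add_C_pow]
      congr 2
      omega
    simp only [hrw] at hcoeff
    have hch : (v.choose (v - (t : ℕ)) : K) ≠ 0 :=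
      Nat.cast_ne_zero.mpr (Nat.choose_pos (Nat.sub_le v t)).ne'
    simp only [← mul_assoc, ← Finset.sum_mul] at hcoeff
    exact (mul_eq_zero.mp hcoeff).resolve_right hch
  have := Matrix.eq_zero_of_forall_pow_sum_mul_pow_eq_zero
    (f := fun j : Fin m => -(b j)) (v := g)
    (fun x y hxy => hb (neg_injective hxy)) key
  exact fun i => congrFun this i

theorem stmt16 (K : Type*) [Field K] [CharZero K] (s : ℕ)
    (a : Fin s → K) (e : Fin s → ℕ)
    (hdist : Function.Injective (fun i => (a i, e i)))
    (hpolya : ∀ i : ℕ, (Finset.univ.filter (fun j => e j < i)).card ≤ i) :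
    Real.sqrt s ≤
      (Module.finrank K
        (Submodule.span K (Set.range fun i => (X - C (a i)) ^ (e i))) : ℝ) := by
  classical
  set V := Submodule.span K (Set.range fun i => (X - C (a i)) ^ (e i)) with hV
  have hfin : FiniteDimensional K V := FiniteDimensional.span_of_finite K (Set.finite_range _)
  set d := Module.finrank K ↥V with hd
  have hmemV : ∀ i : Fin s, (X - C (a i)) ^ (e i) ∈ V :=
    fun i => Submodule.subset_span ⟨i, rfl⟩
  -- Claim 2: each exponent fiber has size ≤ d
  have claim2 : ∀ v : ℕ, (Finset.univ.filter (fun i => e i = v)).card ≤ d := by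
    intro v
    set S := Finset.univ.filter (fun i : Fin s => e i = v) with hS
    have heS : ∀ i ∈ S, e i = v := fun i hi => (Finset.mem_filter.mp hi).2
    have hmle : S.card ≤ v + 1 := by
      calc S.card ≤ (Finset.univ.filter (fun j => e j < v + 1)).card :=
            Finset.card_le_card (fun i hi => by
              have := heS i hi
              simp only [Finset.mem_filter, Finset.mem_univ, true_and]
              omega)
        _ ≤ v + 1 := hpolya (v + 1)
    set σ := S.equivFin.symm with hσ
    set b : Fin S.card → K := fun j => a ((σ j) : Fin s) with hb
    have hbinj : Function.Injective b := by
      intro j₁ j₂ hj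
      have h1 : e ((σ j₁) : Fin s) = e ((σ j₂) : Fin s) := by
        rw [heS _ (σ j₁).2, heS _ (σ j₂).2]
      have := hdist (Prod.ext hj h1)
      exact σ.injective (Subtype.ext this)
    have hli := aux_li_same_exp b hbinj hmle
    have hmem : ∀ j : Fin S.card, (X - C (b j)) ^ v ∈ V := by
      intro j
      have := hmemV ((σ j : Fin s))
      rwa [heS _ (σ j).2] at this
    have hliV : LinearIndependent K (fun j : Fin S.card =>
        (⟨(X - C (b j)) ^ v, hmem j⟩ : V)) :=
      LinearIndependent.of_comp V.subtype hli
    have := hliV.fintype_card_le_finrank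
    simpa using this
  -- Claim 1: number of distinct exponents ≤ d
  have claim1 : (Finset.univ.image e).card ≤ d := by
    set E := Finset.univ.image e with hE
    have hr : ∀ v : {x // x ∈ E}, ∃ i : Fin s, e i = (v : ℕ) := by
      intro v
      obtain ⟨i, _, hi⟩ := Finset.mem_image.mp v.2
      exact ⟨i, hi⟩
    choose r hr using hr
    set p : {x // x ∈ E} → K[X] := fun v => (X - C (a (r v))) ^ (e (r v)) with hp
    have hdeg : ∀ v, (p v).natDegree = (v : ℕ) := by
      intro v
      rw [hp]
      simp only [Polynomial.natDegree_pow, Polynomial.natDegree_X_sub_C, mul_one]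
      exact hr v
    have hli := aux_li_of_natDegree p
      (fun v => pow_ne_zero _ (Polynomial.X_sub_C_ne_zero _))
      (fun v₁ v₂ h => by
        apply Subtype.ext
        rw [← hdeg v₁, ← hdeg v₂]; exact h)
    have hmem : ∀ v, p v ∈ V := fun v => hmemV (r v)
    have hliV : LinearIndependent K (fun v => (⟨p v, hmem v⟩ : V)) :=
      LinearIndependent.of_comp V.subtype hli
    have := hliV.fintype_card_le_finrank
    simpa using this
  have hs : s ≤ d * d := by
    calc s = (Finset.univ : Finset (Fin s)).card := by simp
      _ = ∑ v ∈ Finset.univ.image e, (Finset.univ.filter (fun x => e x = v)).card :=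
          Finset.card_eq_sum_card_image e Finset.univ
      _ ≤ ∑ _v ∈ Finset.univ.image e, d := Finset.sum_le_sum (fun v _ => claim2 v)
      _ = (Finset.univ.image e).card * d := by rw [Finset.sum_const, smul_eq_mul]
      _ ≤ d * d := Nat.mul_le_mul_right d claim1
  have h2 : (s : ℝ) ≤ (d : ℝ) ^ 2 := by
    have : (s : ℝ) ≤ ((d * d : ℕ) : ℝ) := Nat.cast_le.mpr hs
    push_cast at this
    nlinarith [this]
  calc Real.sqrt s ≤ Real.sqrt ((d : ℝ) ^ 2) := Real.sqrt_le_sqrt h2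
    _ = d := Real.sqrt_sq (by positivity)
end

section
/- Let d be a positive integer with d ≡ 2 (mod 4). Let F₁ = {x^i : i odd, i < d} and F₂ = {(x+1)^i : i even, (d+2)/2 ≤ i ≤ d} ∪ {(x-1)^i : i even, (d+2)/2 ≤ i ≤ d}, and F = F₁ ∪ F₂, a family of d+1 polynomials in ℝ[x]. Then the dimension of the linear span of F equals (3d+2)/4. -/
/-!
For even `i` the binomial expansion writes `(X + 1)^i - (X - 1)^i` as a combination of the odd
monomials `X^j`, `j < i`, so the polynomials `(X - 1)^i` do not enlarge the span. The remaining
polynomials have pairwise distinct degrees, namely the odd `j < d` and the even `j` with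
`(d + 2)/2 ≤ j ≤ d`, hence are linearly independent, and there are `d/2 + (d + 2)/4 = (3d + 2)/4`
of them.
-/

open Polynomial Finset Submodule Module

def oddEvenDegrees (d m : ℕ) : Finset ℕ :=
  (range (d / 2)).image (2 * · + 1) ∪ (Icc ((m + 1) / 2) (d / 2)).image (2 * ·)

theorem mem_oddEvenDegrees {d m j : ℕ} :
    j ∈ oddEvenDegrees d m ↔ Odd j ∧ j < d ∨ Even j ∧ m ≤ j ∧ j ≤ d := by
  simp only [oddEvenDegrees, mem_union, mem_image, mem_range, mem_Icc, Nat.odd_iff, Nat.even_iff]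
  constructor
  · rintro (⟨t, ht, rfl⟩ | ⟨t, ht, rfl⟩) <;> omega
  · rintro (h | h)
    · exact Or.inl ⟨j / 2, by omega, by omega⟩
    · exact Or.inr ⟨j / 2, by omega, by omega⟩

theorem card_oddEvenDegrees (d m : ℕ) :
    #(oddEvenDegrees d m) = d / 2 + (d / 2 + 1 - (m + 1) / 2) := by
  rw [oddEvenDegrees, card_union_of_disjoint, card_image_of_injective, card_image_of_injective,
    card_range, Nat.card_Icc]
  · exact fun a b h => by omega
  · exact fun a b h => by omega
  · simp only [disjoint_left, mem_image]
    rintro _ ⟨a, -, rfl⟩ ⟨b, -, h⟩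
    omega

namespace Polynomial

variable {R : Type*} [CommRing R]

theorem X_add_C_pow_sub_X_sub_C_pow_mem_span (a : R) {n : ℕ} (hn : Even n) :
    (X + C a) ^ n - (X - C a) ^ n ∈ span R {p : R[X] | ∃ j, Odd j ∧ j < n ∧ p = X ^ j} := by
  have hexpand : (X + C a) ^ n - (X - C a) ^ n =
      ∑ j ∈ range (n + 1), ((a ^ (n - j) - (-a) ^ (n - j)) * n.choose j) • (X : R[X]) ^ j := by
    rw [sub_eq_add_neg X, add_pow, add_pow, ← sum_sub_distrib]
    refine sum_congr rfl fun j _ => ?_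
    simp only [smul_eq_C_mul, C_mul, C_sub, C_pow, C_neg, map_natCast]
    ring
  rw [hexpand]
  refine sum_mem fun j hj => ?_
  rcases Nat.even_or_odd j with hj_even | hj_odd
  · rw [(hn.tsub hj_even).neg_pow, sub_self, zero_mul, zero_smul]
    exact zero_mem _
  · have hjn : j < n := lt_of_le_of_ne (Nat.lt_succ_iff.mp (mem_range.mp hj))
      (by rintro rfl; exact Nat.not_even_iff_odd.mpr hj_odd hn)
    exact smul_mem _ _ (subset_span ⟨j, hj_odd, hjn, rfl⟩)

theorem span_union_X_sub_C_pow_eq (a : R) (d m : ℕ) :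
    span R ({p : R[X] | ∃ i, Odd i ∧ i < d ∧ p = X ^ i} ∪
        {p | ∃ i, Even i ∧ m ≤ i ∧ i ≤ d ∧ p = (X + C a) ^ i} ∪
        {p | ∃ i, Even i ∧ m ≤ i ∧ i ≤ d ∧ p = (X - C a) ^ i}) =
      span R ({p : R[X] | ∃ i, Odd i ∧ i < d ∧ p = X ^ i} ∪
        {p | ∃ i, Even i ∧ m ≤ i ∧ i ≤ d ∧ p = (X + C a) ^ i}) := by
  refine le_antisymm (span_le.mpr ?_) (span_mono Set.subset_union_left)
  rintro p (hp | ⟨i, hi, hmi, hid, rfl⟩)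
  · exact subset_span hp
  · have hodd : span R {p : R[X] | ∃ j, Odd j ∧ j < i ∧ p = X ^ j} ≤
        span R ({p : R[X] | ∃ i, Odd i ∧ i < d ∧ p = X ^ i} ∪
          {p | ∃ i, Even i ∧ m ≤ i ∧ i ≤ d ∧ p = (X + C a) ^ i}) :=
      span_mono fun q ⟨j, hj, hji, hq⟩ => Or.inl ⟨j, hj, hji.trans_le hid, hq⟩
    rw [← sub_sub_cancel ((X + C a) ^ i) ((X - C a) ^ i)]
    exact sub_mem (subset_span (Or.inr ⟨i, hi, hmi, hid, rfl⟩))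
      (hodd (X_add_C_pow_sub_X_sub_C_pow_mem_span a hi))

namespace Sequence

theorem finrank_span_image [IsDomain R] (P : Sequence R) (s : Finset ℕ) :
    finrank R (span R (P '' s)) = #s := by
  rw [Set.image_eq_range]
  exact (finrank_span_eq_card (P.linearIndependent.comp _ Subtype.val_injective)).trans
    (Fintype.card_coe s)

noncomputable def oddXPowEvenXAddCPow [Nontrivial R] (a : R) : Sequence R where
  elems' j := if Odd j then X ^ j else (X + C a) ^ j
  degree_eq' j := by
    split_ifs
    · exact degree_X_pow j
    · rw [degree_eq_natDegree ((monic_X_add_C a).pow j).ne_zero, natDegree_pow_X_add_C]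

theorem image_oddXPowEvenXAddCPow [Nontrivial R] (a : R) (d m : ℕ) :
    oddXPowEvenXAddCPow a '' oddEvenDegrees d m =
      {p | ∃ i, Odd i ∧ i < d ∧ p = X ^ i} ∪
        {p | ∃ i, Even i ∧ m ≤ i ∧ i ≤ d ∧ p = (X + C a) ^ i} := by
  ext p
  simp only [Set.mem_image, mem_coe, mem_oddEvenDegrees, Set.mem_union, Set.mem_ofPred_eq]
  constructor
  · rintro ⟨j, ⟨hj, hjd⟩ | ⟨hj, hmj, hjd⟩, rfl⟩
    · exact Or.inl ⟨j, hj, hjd, if_pos hj⟩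
    · exact Or.inr ⟨j, hj, hmj, hjd, if_neg (Nat.not_odd_iff_even.mpr hj)⟩
  · rintro (⟨i, hi, hid, rfl⟩ | ⟨i, hi, hmi, hid, rfl⟩)
    · exact ⟨i, Or.inl ⟨hi, hid⟩, if_pos hi⟩
    · exact ⟨i, Or.inr ⟨hi, hmi, hid⟩, if_neg (Nat.not_odd_iff_even.mpr hi)⟩

end Sequence

end Polynomial

theorem stmt18_general (d : ℕ) (hmod : d % 4 = 2) :
    Module.finrank ℝ
      (Submodule.span ℝ
        ({p : Polynomial ℝ | ∃ i, Odd i ∧ i < d ∧ p = X ^ i} ∪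
         {p : Polynomial ℝ | ∃ i, Even i ∧ (d + 2) / 2 ≤ i ∧ i ≤ d ∧
            p = (X + C 1) ^ i} ∪
         {p : Polynomial ℝ | ∃ i, Even i ∧ (d + 2) / 2 ≤ i ∧ i ≤ d ∧
            p = (X - C 1) ^ i})) = (3 * d + 2) / 4 := by
  rw [span_union_X_sub_C_pow_eq, ← Sequence.image_oddXPowEvenXAddCPow,
    Sequence.finrank_span_image, card_oddEvenDegrees]
  omega

theorem stmt18 (d : ℕ) (hd : 0 < d) (hmod : d % 4 = 2) :
    Module.finrank ℝ
      (Submodule.span ℝ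
        ({p : Polynomial ℝ | ∃ i, Odd i ∧ i < d ∧ p = X ^ i} ∪
         {p : Polynomial ℝ | ∃ i, Even i ∧ (d + 2) / 2 ≤ i ∧ i ≤ d ∧
            p = (X + C 1) ^ i} ∪
         {p : Polynomial ℝ | ∃ i, Even i ∧ (d + 2) / 2 ≤ i ∧ i ≤ d ∧
            p = (X - C 1) ^ i})) = (3 * d + 2) / 4 :=
  stmt18_general d hmod
end
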